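/- arXiv:1301.5414 — 11 statements merged into one kernel-verified Lean document; each statement's English description precedes it below -/
import Mathlib

section
/- Let K be a field of characteristic zero, let a_1, ..., a_n be natural numbers, let N be an n×n matrix over K with det(N) ≠ 0, and set A = diag(X^{a_1}, ..., X^{a_n})·N ∈ M_n(K[X]) and D = a_1 + ... + a_n. Then det(A) has degree exactly D, and for each i, the maximum over j of the degrees of the entries (adj A)_{j,i} of the i-th column of the adjugate of A equals D − a_i. -/
/-- Sharpness of the degree bounds of Lemma 1: for `A = diag(X^{a_1}, …, X^{a_n}) · N`
with `N` a scalar matrix of nonzero determinant and `D = Σᵢ a i`, the degree of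
`det A` is exactly `D` and, for each `i`, the maximum of the degrees of the entries
of the `i`-th column of `adj A` is exactly `D − a i`. -/
theorem det_adjugate_degree_bounds_sharp {K : Type*} [Field K] [CharZero K] {n : ℕ}
    (a : Fin n → ℕ)
    (N : Matrix (Fin n) (Fin n) K) (hN : N.det ≠ 0)
    (A : Matrix (Fin n) (Fin n) (Polynomial K))
    (hA : A = (Matrix.diagonal fun i => (Polynomial.X : Polynomial K) ^ a i)
        * N.map (fun x => Polynomial.C x))
    (D : ℕ) (hD : D = ∑ i, a i) :
    A.det.degree = (D : WithBot ℕ) ∧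
      ∀ i : Fin n,
        (Finset.univ.sup fun j => (A.adjugate j i).degree)
          = ((D - a i : ℕ) : WithBot ℕ) := by
  have hmap : N.map (fun x => Polynomial.C x) = (Polynomial.C : K →+* Polynomial K).mapMatrix N := rfl
  constructor
  · rw [hA, Matrix.det_mul, Matrix.det_diagonal, hmap, ← RingHom.map_det,
      Finset.prod_pow_eq_pow_sum, ← hD, mul_comm]
    exact Polynomial.degree_C_mul_X_pow D hN
  · intro i
    -- adjugate A = adjugate (C N) * adjugate diag
    have hadj : A.adjugate = ((Polynomial.C : K →+* Polynomial K).mapMatrix N.adjugate) *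
        Matrix.diagonal (fun i => ∏ j ∈ Finset.univ.erase i, (Polynomial.X : Polynomial K) ^ a j) := by
      rw [hA, Matrix.adjugate_mul_distrib, hmap, ← RingHom.map_adjugate,
        Matrix.adjugate_diagonal]
    have hDia : D - a i = ∑ j ∈ Finset.univ.erase i, a j := by
      have := Finset.add_sum_erase Finset.univ a (Finset.mem_univ i)
      omega
    have hentry : ∀ j, A.adjugate j i = Polynomial.C (N.adjugate j i) *
        (Polynomial.X : Polynomial K) ^ (D - a i) := by
      intro j
      rw [hadj, Matrix.mul_diagonal, Finset.prod_pow_eq_pow_sum, ← hDia]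
      rfl
    -- exists j with adjugate N j i ≠ 0
    obtain ⟨j, hj⟩ : ∃ j, N.adjugate j i ≠ 0 := by
      by_contra h
      push_neg at h
      have : (N * N.adjugate) i i = 0 := by
        rw [Matrix.mul_apply]
        exact Finset.sum_eq_zero fun k _ => by rw [h k, mul_zero]
      rw [Matrix.mul_adjugate] at this
      simp [hN] at this
    apply le_antisymm
    · apply Finset.sup_le
      intro k _
      rw [hentry k]
      exact Polynomial.degree_C_mul_X_pow_le _ _
    · refine le_trans ?_ (Finset.le_sup (Finset.mem_univ j))
      rw [hentry j, Polynomial.degree_C_mul_X_pow _ hj]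
end

section
/- Let F be a differential field of characteristic zero with derivation ∂, let M ∈ M_n(F), let 1 ≤ k ≤ n, and let P ∈ M_n(F) be invertible. Then the gauge transform P[M] = (PM + ∂P)P⁻¹ has block form ((C, 0), (∗, ∗)) with C a companion matrix of dimension k (upper-left k×k block equal to a companion matrix and upper-right k×(n−k) block zero) if and only if there exists a row vector u ∈ F^n such that the first k rows of P are u, δ(u), ..., δ^{k−1}(u) and δ^k(u) lies in the F-linear span of u, δ(u), ..., δ^{k−1}(u). -/
/-- `δ(u) = u M + ∂u` for a row vector `u`, the derivation `der` being applied
entrywise. -/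
def cvDelta {F : Type*} [Field F] {n : ℕ} (der : F → F)
    (M : Matrix (Fin n) (Fin n) F) (u : Fin n → F) : Fin n → F :=
  Matrix.vecMul u M + fun i => der (u i)

/-- The gauge transform of `A` by an invertible `P`: `P[A] = (P A + ∂P) P⁻¹`. -/
noncomputable def cvGauge {F : Type*} [Field F] {n : ℕ} (der : F → F)
    (P A : Matrix (Fin n) (Fin n) F) : Matrix (Fin n) (Fin n) F :=
  (P * A + P.map der) * P⁻¹

lemma cv_vecMul_single {F : Type*} [Field F] {n : ℕ} (P : Matrix (Fin n) (Fin n) F)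
    (m : ℕ) (hm : m < n) :
    Matrix.vecMul (fun l : Fin n => if (l : ℕ) = m then (1 : F) else 0) P = P ⟨m, hm⟩ := by
  funext j
  simp only [Matrix.vecMul, dotProduct, ite_mul, one_mul, zero_mul]
  have h : ∀ l : Fin n, ((l : ℕ) = m) = (l = ⟨m, hm⟩) := fun l => by simp [Fin.ext_iff]
  simp only [h, Finset.sum_ite_eq', Finset.mem_univ, if_true]

lemma cv_vecMul_eq_sum {F : Type*} [Field F] {n : ℕ} (v : Fin n → F)
    (P : Matrix (Fin n) (Fin n) F) :
    Matrix.vecMul v P = ∑ l, v l • P l := by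
  funext j
  simp [Matrix.vecMul, dotProduct]

/-- `P[M]` has block form `((C, 0), (∗, ∗))` with `C` companion of dimension `k`
iff there is a row vector `u` such that the first `k` rows of `P` are
`u, δ(u), …, δ^{k−1}(u)` and `δ^k(u)` lies in the span of `u, δ(u), …, δ^{k−1}(u)`. -/
theorem gauge_companion_block_iff_cyclic {F : Type*} [Field F] [CharZero F] {n k : ℕ}
    (hk1 : 1 ≤ k) (hkn : k ≤ n)
    (der : F → F)
    (h_add : ∀ a b : F, der (a + b) = der a + der b)
    (h_mul : ∀ a b : F, der (a * b) = a * der b + der a * b)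
    (M P : Matrix (Fin n) (Fin n) F) (hP : IsUnit P.det) :
    ((∀ i j : Fin n, (i : ℕ) + 1 < k →
        cvGauge der P M i j = if (j : ℕ) = (i : ℕ) + 1 then 1 else 0) ∧
     (∀ i j : Fin n, (i : ℕ) + 1 = k → k ≤ (j : ℕ) → cvGauge der P M i j = 0)) ↔
    ∃ u : Fin n → F,
      (∀ i : Fin n, (i : ℕ) < k → P i = (cvDelta der M)^[(i : ℕ)] u) ∧
      (cvDelta der M)^[k] u ∈
        Submodule.span F (Set.range fun i : Fin k => (cvDelta der M)^[(i : ℕ)] u) := by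
  set G := cvGauge der P M with hG
  set δ := cvDelta der M with hδ
  have hGP : G * P = P * M + P.map der := by
    rw [hG]
    unfold cvGauge
    rw [Matrix.mul_assoc, Matrix.nonsing_inv_mul P hP, Matrix.mul_one]
  have hrow : ∀ i, Matrix.vecMul (G i) P = δ (P i) := by
    intro i
    funext j
    have h1 := congrFun (congrFun hGP i) j
    have h2 : (G * P) i j = Matrix.vecMul (G i) P j := by
      simp [Matrix.mul_apply, Matrix.vecMul, dotProduct]
    have h3 : (P * M + P.map der) i j = δ (P i) j := by
      simp [hδ, cvDelta, Matrix.mul_apply, Matrix.vecMul, dotProduct,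
        Matrix.add_apply, Matrix.map_apply]
    rw [h2, h3] at h1
    exact h1
  have hinj : ∀ v w : Fin n → F, Matrix.vecMul v P = Matrix.vecMul w P → v = w := by
    intro v w h
    have := congrArg (fun x => Matrix.vecMul x P⁻¹) h
    simpa [Matrix.vecMul_vecMul, Matrix.mul_nonsing_inv P hP, Matrix.vecMul_one] using this
  constructor
  · rintro ⟨h1, h2⟩
    have h0n : 0 < n := lt_of_lt_of_le hk1 hkn
    have key : ∀ m, m < k → ∀ hmn : m < n, P ⟨m, hmn⟩ = δ^[m] (P ⟨0, h0n⟩) := by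
      intro m
      induction m with
      | zero => intro _ _; simp
      | succ m ih =>
        intro hmk hmn
        have hmn' : m < n := Nat.lt_of_succ_lt hmn
        have hmk' : m < k := Nat.lt_of_succ_lt hmk
        have ihm := ih hmk' hmn'
        have hrowm : G ⟨m, hmn'⟩ = fun j : Fin n =>
            if (j : ℕ) = m + 1 then (1 : F) else 0 := by
          funext j
          exact h1 ⟨m, hmn'⟩ j (by simpa using hmk)
        have := hrow ⟨m, hmn'⟩
        rw [hrowm, cv_vecMul_single P (m + 1) hmn] at this
        rw [this, ihm, ← Function.iterate_succ_apply' δ m]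
    refine ⟨P ⟨0, h0n⟩, ?_, ?_⟩
    · intro i hi
      have := key (i : ℕ) hi i.isLt
      simpa [Fin.eta] using this
    · have hk1n : k - 1 < n := lt_of_lt_of_le (Nat.sub_lt hk1 one_pos) hkn
      set i0 : Fin n := ⟨k - 1, hk1n⟩ with hi0
      have hPi0 : P i0 = δ^[k - 1] (P ⟨0, h0n⟩) := key (k - 1) (Nat.sub_lt hk1 one_pos) hk1n
      have hkk : k - 1 + 1 = k := Nat.succ_pred_eq_of_pos hk1
      have hδk : δ^[k] (P ⟨0, h0n⟩) = δ (P i0) := by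
        conv_lhs => rw [← hkk]
        rw [Function.iterate_succ_apply', hPi0]
      rw [hδk, ← hrow i0, cv_vecMul_eq_sum]
      apply Submodule.sum_mem
      intro l _
      by_cases hl : (l : ℕ) < k
      · apply Submodule.smul_mem
        apply Submodule.subset_span
        refine ⟨⟨(l : ℕ), hl⟩, ?_⟩
        have := (key (l : ℕ) hl l.isLt).symm
        simpa [Fin.eta] using this
      · have : G i0 l = 0 := h2 i0 l (by simp [hi0, hkk]) (le_of_not_gt hl)
        rw [this, zero_smul]
        exact Submodule.zero_mem _
  · rintro ⟨u, hu, hspan⟩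
    constructor
    · intro i j hij
      have hi1n : (i : ℕ) + 1 < n := lt_of_lt_of_le hij hkn
      have hik : (i : ℕ) < k := Nat.lt_of_succ_lt hij
      have h1 : Matrix.vecMul (G i) P =
          Matrix.vecMul (fun l : Fin n => if (l : ℕ) = (i : ℕ) + 1 then (1 : F) else 0) P := by
        rw [hrow i, cv_vecMul_single P ((i : ℕ) + 1) hi1n, hu i hik,
          ← Function.iterate_succ_apply' δ (i : ℕ), ← hu ⟨(i : ℕ) + 1, hi1n⟩ hij]
      have := hinj _ _ h1
      exact congrFun this j
    · intro i j hik hkj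
      obtain ⟨c, hc⟩ := (Submodule.mem_span_range_iff_exists_fun F).mp hspan
      set v : Fin n → F := fun l => if h : (l : ℕ) < k then c ⟨(l : ℕ), h⟩ else 0 with hv
      set g : ℕ → Fin n → F :=
        fun m => if h : m < k then c ⟨m, h⟩ • δ^[m] u else 0 with hg
      have e1 : Matrix.vecMul v P = ∑ m ∈ Finset.range n, g m := by
        rw [cv_vecMul_eq_sum, ← Fin.sum_univ_eq_sum_range g n]
        apply Finset.sum_congr rfl
        intro l _
        by_cases hl : (l : ℕ) < k
        · simp [hv, hg, hl, hu l hl]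
        · simp [hv, hg, hl]
      have e2 : ∑ m ∈ Finset.range k, g m = ∑ m ∈ Finset.range n, g m := by
        apply Finset.sum_subset (Finset.range_subset_range.mpr hkn)
        intro x _ hx
        simp only [Finset.mem_range] at hx
        simp [hg, hx]
      have e3 : ∑ i : Fin k, c i • δ^[(i : ℕ)] u = ∑ m ∈ Finset.range k, g m := by
        rw [← Fin.sum_univ_eq_sum_range g k]
        apply Finset.sum_congr rfl
        intro i _
        simp [hg, i.isLt]
      have hsum : Matrix.vecMul v P = δ^[k] u := by
        rw [e1, ← e2, ← e3, hc]
      have hδP : δ (P i) = δ^[k] u := by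
        rw [hu i (by omega), ← Function.iterate_succ_apply' δ (i : ℕ), Nat.succ_eq_add_one, hik]
      have hGv : G i = v := hinj _ _ (by rw [hrow i, hδP, hsum])
      rw [hGv, hv]
      simp [Nat.not_lt.mpr hkj]
end

section
/- Let F be a differential field of characteristic zero with derivation ∂, let M ∈ M_n(F), let 2 ≤ k ≤ n, and let P ∈ M_n(F) be invertible. Then the gauge transform P[M] = (PM + ∂P)P⁻¹ has its first k−1 rows in companion shape (i.e., for 1 ≤ i ≤ k−1, the i-th row of P[M] equals the standard basis row e_{i+1}) if and only if there exists a row vector u ∈ F^n such that the first k rows of P are u, δ(u), ..., δ^{k−1}(u). -/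
/-- `P[M]` has its first `k−1` rows in companion shape iff there is a row
vector `u` such that the first `k` rows of `P` are `u, δ(u), …, δ^{k−1}(u)`. -/
theorem gauge_partial_companion_iff {F : Type*} [Field F] [CharZero F] {n k : ℕ}
    (hk1 : 2 ≤ k) (hkn : k ≤ n)
    (der : F → F)
    (h_add : ∀ a b : F, der (a + b) = der a + der b)
    (h_mul : ∀ a b : F, der (a * b) = a * der b + der a * b)
    (M P : Matrix (Fin n) (Fin n) F) (hP : IsUnit P.det) :
    (∀ i j : Fin n, (i : ℕ) + 1 < k →
        cvGauge der P M i j = if (j : ℕ) = (i : ℕ) + 1 then 1 else 0) ↔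
    ∃ u : Fin n → F, ∀ i : Fin n, (i : ℕ) < k → P i = (cvDelta der M)^[(i : ℕ)] u := by
  have hPinv : P⁻¹ * P = 1 := Matrix.nonsing_inv_mul P hP
  have hPinv' : P * P⁻¹ = 1 := Matrix.mul_nonsing_inv P hP
  have hrow : ∀ i : Fin n,
      cvGauge der P M i = Matrix.vecMul (cvDelta der M (P i)) P⁻¹ := by
    intro i
    have h1 : (P * M + P.map der) i = cvDelta der M (P i) := by
      ext j
      simp [cvDelta, Matrix.mul_apply, Matrix.vecMul, dotProduct, Matrix.map_apply,
        Matrix.add_apply]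
    show ((P * M + P.map der) * P⁻¹) i = _
    rw [← h1]
    ext j
    simp [Matrix.mul_apply, Matrix.vecMul, dotProduct]
  have cancel : ∀ v w : Fin n → F,
      Matrix.vecMul v P⁻¹ = w ↔ v = Matrix.vecMul w P := by
    intro v w
    constructor
    · rintro rfl
      rw [Matrix.vecMul_vecMul, hPinv, Matrix.vecMul_one]
    · rintro rfl
      rw [Matrix.vecMul_vecMul, hPinv', Matrix.vecMul_one]
  have evec : ∀ j' : Fin n,
      Matrix.vecMul (fun j : Fin n => if (j : ℕ) = (j' : ℕ) then (1 : F) else 0) P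
        = P j' := by
    intro j'
    ext l
    simp only [Matrix.vecMul, dotProduct, Fin.val_eq_val, ite_mul, one_mul, zero_mul]
    rw [Finset.sum_ite_eq' (Finset.univ) j' (fun j => P j l)]
    simp
  have hC : (∀ i j : Fin n, (i : ℕ) + 1 < k →
        cvGauge der P M i j = if (j : ℕ) = (i : ℕ) + 1 then 1 else 0) ↔
      (∀ m : ℕ, (hm : m + 1 < k) →
        cvDelta der M (P ⟨m, by omega⟩) = P ⟨m + 1, by omega⟩) := by
    constructor
    · intro h m hm
      have h2 : Matrix.vecMul (cvDelta der M (P ⟨m, by omega⟩)) P⁻¹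
          = fun j : Fin n => if (j : ℕ) = m + 1 then (1 : F) else 0 := by
        rw [← hrow ⟨m, by omega⟩]
        ext j
        exact h ⟨m, by omega⟩ j hm
      rw [cancel] at h2
      rw [h2]
      exact evec ⟨m + 1, by omega⟩
    · intro h i j hi
      have h3 : Matrix.vecMul (cvDelta der M (P i)) P⁻¹
          = fun j : Fin n => if (j : ℕ) = (i : ℕ) + 1 then (1 : F) else 0 := by
        rw [cancel]
        have h4 := h (i : ℕ) hi
        rw [show (⟨(i : ℕ), by omega⟩ : Fin n) = i from Fin.ext rfl] at h4
        rw [h4]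
        exact (evec ⟨(i : ℕ) + 1, by omega⟩).symm
      rw [hrow i]
      exact congrFun h3 j
  rw [hC]
  constructor
  · intro h
    refine ⟨P ⟨0, by omega⟩, ?_⟩
    have main : ∀ m : ℕ, (hm : m < k) →
        P ⟨m, by omega⟩ = (cvDelta der M)^[m] (P ⟨0, by omega⟩) := by
      intro m
      induction m with
      | zero => intro _; simp
      | succ m ih =>
        intro hm
        rw [Function.iterate_succ_apply', ← ih (by omega), ← h m hm]
    intro i hi
    have := main (i : ℕ) hi
    rw [show (⟨(i : ℕ), by omega⟩ : Fin n) = i from Fin.ext rfl] at this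
    exact this
  · rintro ⟨u, hu⟩ m hm
    have h1 : P ⟨m, by omega⟩ = (cvDelta der M)^[m] u :=
      hu ⟨m, by omega⟩ (Nat.lt_of_succ_lt hm)
    have h2 : P ⟨m + 1, by omega⟩ = (cvDelta der M)^[m + 1] u :=
      hu ⟨m + 1, by omega⟩ hm
    rw [h1, h2, Function.iterate_succ_apply']
end

section
/- Let F be a differential field of characteristic zero with derivation ∂, let M ∈ M_n(F), and let P ∈ M_n(F) be invertible with P[M] = diag(C^{(1)}, ..., C^{(t)}), where C^{(i)} is a companion matrix of dimension k_i with last row (c^{(i)}_0, ..., c^{(i)}_{k_i−1}) and k_1 + ... + k_t = n. Then a column vector Y ∈ F^n satisfies ∂Y = MY if and only if there exist z^{(1)}, ..., z^{(t)} ∈ F such that PY is the vertical concatenation of the column vectors Z^{(i)} = (z^{(i)}, ∂z^{(i)}, ..., ∂^{k_i−1} z^{(i)})ᵀ and, for every i, ∂^{k_i} z^{(i)} = c^{(i)}_{k_i−1} ∂^{k_i−1} z^{(i)} + ... + c^{(i)}_0 z^{(i)}. -/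
/-- A `k × k` matrix is companion if its rows `1, …, k−1` are the standard
basis rows `e_2, …, e_k` (its last row being arbitrary). -/
def IsCompanionMat {F : Type*} [Field F] {k : ℕ} (C : Matrix (Fin k) (Fin k) F) : Prop :=
  ∀ i j : Fin k, (i : ℕ) + 1 < k → C i j = if (j : ℕ) = (i : ℕ) + 1 then 1 else 0

/-!
Since `∂(PY) = P ∂Y + (∂P) Y`, the map `Y ↦ PY` turns solutions of `∂Y = MY` into solutions of
`∂W = P[M] W`. A block-diagonal system splits into one system per block, and in a companion
system the first `k - 1` rows say exactly that the coordinates are the successive derivatives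
of the first one, while the last row becomes the scalar equation for it.
-/

open Matrix

section Blocks

variable {R : Type*} [Semiring R]

theorem reindex_mulVec {m n : Type*} [Fintype m] [Fintype n] (e : m ≃ n)
    (A : Matrix m m R) (w : n → R) :
    reindex e e A *ᵥ w = (A *ᵥ (w ∘ e)) ∘ e.symm := by
  rw [reindex_apply, submatrix_mulVec_equiv, Equiv.symm_symm]

theorem blockDiagonal'_mulVec_apply {o : Type*} [Fintype o] [DecidableEq o] {m : o → Type*}
    [∀ i, Fintype (m i)] (C : (i : o) → Matrix (m i) (m i) R) (v : (Σ i, m i) → R)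
    (i : o) (a : m i) :
    (blockDiagonal' C *ᵥ v) ⟨i, a⟩ = (C i *ᵥ fun b => v ⟨i, b⟩) a := by
  simp only [mulVec, dotProduct, Fintype.sum_sigma]
  rw [Finset.sum_eq_single i]
  · simp [blockDiagonal'_apply]
  · intro j _ hj
    simp [blockDiagonal'_apply, Ne.symm hj]
  · simp

theorem der_eq_reindex_blockDiagonal'_mulVec_iff (der : R → R)
    {o : Type*} [Fintype o] [DecidableEq o] {m : o → Type*} [∀ i, Fintype (m i)]
    {n : Type*} [Fintype n] (C : (i : o) → Matrix (m i) (m i) R) (e : (Σ i, m i) ≃ n)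
    (w : n → R) :
    (fun r => der (w r)) = reindex e e (blockDiagonal' C) *ᵥ w ↔
      ∀ i, (fun a => der (w (e ⟨i, a⟩))) = C i *ᵥ fun a => w (e ⟨i, a⟩) := by
  rw [reindex_mulVec, funext_iff, ← e.forall_congr_right]
  simp only [Function.comp_apply, Equiv.symm_apply_apply, Sigma.forall, funext_iff,
    blockDiagonal'_mulVec_apply]

end Blocks

theorem der_mulVec {R : Type*} [Ring R] (der : R → R)
    (h_add : ∀ a b : R, der (a + b) = der a + der b)
    (h_mul : ∀ a b : R, der (a * b) = a * der b + der a * b)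
    {m n : Type*} [Fintype n] (A : Matrix m n R) (v : n → R) :
    (fun r => der ((A *ᵥ v) r)) = A *ᵥ (fun j => der (v j)) + A.map der *ᵥ v := by
  funext r
  simp only [mulVec, dotProduct, Pi.add_apply, map_apply, ← Finset.sum_add_distrib, ← h_mul]
  exact map_sum (AddMonoidHom.mk' der h_add) _ _

theorem der_eq_mulVec_iff_gauge {F : Type*} [Field F] (der : F → F)
    (h_add : ∀ a b : F, der (a + b) = der a + der b)
    (h_mul : ∀ a b : F, der (a * b) = a * der b + der a * b)
    {n : ℕ} {M P : Matrix (Fin n) (Fin n) F} (hP : IsUnit P.det) (Y : Fin n → F) :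
    (fun r => der (Y r)) = M *ᵥ Y ↔
      (fun r => der ((P *ᵥ Y) r)) = cvGauge der P M *ᵥ (P *ᵥ Y) := by
  have hgauge : cvGauge der P M *ᵥ (P *ᵥ Y) = P *ᵥ (M *ᵥ Y) + P.map der *ᵥ Y := by
    rw [cvGauge, mulVec_mulVec, mul_assoc, nonsing_inv_mul P hP, mul_one, add_mulVec,
      mulVec_mulVec]
  rw [der_mulVec der h_add h_mul, hgauge, add_left_inj,
    (mulVec_injective_of_isUnit ((isUnit_iff_isUnit_det P).mpr hP)).eq_iff]

section Companion

variable {F : Type*} [Field F] {k : ℕ} {C : Matrix (Fin k) (Fin k) F}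

theorem IsCompanionMat.mulVec_apply (hC : IsCompanionMat C) (v : Fin k → F) {a : Fin k}
    (ha : (a : ℕ) + 1 < k) : (C *ᵥ v) a = v ⟨a + 1, ha⟩ := by
  simp only [mulVec, dotProduct, hC a _ ha, ite_mul, one_mul, zero_mul]
  rw [Finset.sum_eq_single ⟨a + 1, ha⟩] <;> simp +contextual [Fin.ext_iff]

/-- The first `k - 1` rows of the system say that `v a = ∂^a (v 0)`; the last row is then the
scalar equation for `z = v 0`. -/
theorem IsCompanionMat.der_eq_mulVec_iff (hC : IsCompanionMat C) (der : F → F) (hk : 0 < k)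
    (v : Fin k → F) :
    (fun a => der (v a)) = C *ᵥ v ↔
      ∃ z, (∀ a : Fin k, v a = der^[a] z) ∧
        der^[k] z = ∑ l : Fin k, C ⟨k - 1, Nat.sub_lt hk Nat.one_pos⟩ l * der^[l] z := by
  set last : Fin k := ⟨k - 1, Nat.sub_lt hk Nat.one_pos⟩
  have iterate_last (z : F) : der (der^[last] z) = der^[k] z :=
    congrFun (Function.comp_iterate_pred_of_pos der hk) z
  constructor
  · intro hsys
    replace hsys a : der (v a) = (C *ᵥ v) a := congrFun hsys a
    have hv (a : Fin k) : v a = der^[a] (v ⟨0, hk⟩) := by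
      obtain ⟨m, hm⟩ := a
      induction m with
      | zero => rfl
      | succ m ih =>
        rw [← hC.mulVec_apply v (a := ⟨m, by omega⟩) hm, ← hsys, ih (by omega),
          Function.iterate_succ_apply' der]
    refine ⟨v ⟨0, hk⟩, hv, ?_⟩
    rw [← iterate_last, ← hv, hsys, mulVec, dotProduct]
    exact Finset.sum_congr rfl fun l _ => by rw [hv l]
  · rintro ⟨z, hv, hz⟩
    funext a
    rw [hv]
    by_cases ha : (a : ℕ) + 1 < k
    · rw [hC.mulVec_apply v ha, hv, ← Function.iterate_succ_apply' der]
    · obtain rfl : a = last := Fin.ext (by simp [last]; omega)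
      rw [iterate_last, hz]
      simp only [mulVec, dotProduct, hv]

end Companion

theorem uncoupling_solutions_general {F : Type*} [Field F] {n t : ℕ}
    (der : F → F)
    (h_add : ∀ a b : F, der (a + b) = der a + der b)
    (h_mul : ∀ a b : F, der (a * b) = a * der b + der a * b)
    (M P : Matrix (Fin n) (Fin n) F) (hP : IsUnit P.det)
    (k : Fin t → ℕ) (hk0 : ∀ i, 0 < k i)
    (C : (i : Fin t) → Matrix (Fin (k i)) (Fin (k i)) F)
    (hC : ∀ i, IsCompanionMat (C i))
    (e : (Σ i : Fin t, Fin (k i)) ≃ Fin n)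
    (hdiag : cvGauge der P M = Matrix.reindex e e (Matrix.blockDiagonal' C))
    (Y : Fin n → F) :
    (fun r => der (Y r)) = M.mulVec Y ↔
    ∃ z : Fin t → F,
      (∀ (i : Fin t) (a : Fin (k i)), P.mulVec Y (e ⟨i, a⟩) = der^[(a : ℕ)] (z i)) ∧
      ∀ i : Fin t, der^[k i] (z i) =
        ∑ l : Fin (k i), C i ⟨k i - 1, Nat.sub_lt (hk0 i) Nat.one_pos⟩ l * der^[(l : ℕ)] (z i) := by
  rw [der_eq_mulVec_iff_gauge der h_add h_mul hP, hdiag,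
    der_eq_reindex_blockDiagonal'_mulVec_iff]
  simp only [fun i => (hC i).der_eq_mulVec_iff der (hk0 i), Classical.skolem, forall_and]

/-- If `P[M] = diag(C⁽¹⁾, …, C⁽ᵗ⁾)` with companion blocks `C⁽ⁱ⁾` of sizes `k i`,
then `∂Y = M Y` iff `P Y` is the vertical concatenation of the vectors
`(z i, ∂(z i), …, ∂^{k i − 1}(z i))ᵀ` for scalars `z i` satisfying the scalar
equations `∂^{k i}(z i) = Σ_l c^{(i)}_l ∂^l (z i)` given by the last rows of
the companion blocks.  Here `e` is the order-preserving identification of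
`Σ i, Fin (k i)` with `Fin n` placing the blocks consecutively. -/
theorem uncoupling_solutions {F : Type*} [Field F] [CharZero F] {n t : ℕ}
    (der : F → F)
    (h_add : ∀ a b : F, der (a + b) = der a + der b)
    (h_mul : ∀ a b : F, der (a * b) = a * der b + der a * b)
    (M P : Matrix (Fin n) (Fin n) F) (hP : IsUnit P.det)
    (k : Fin t → ℕ) (hk0 : ∀ i, 0 < k i) (hk : ∑ i, k i = n)
    (C : (i : Fin t) → Matrix (Fin (k i)) (Fin (k i)) F)
    (hC : ∀ i, IsCompanionMat (C i))
    (e : (Σ i : Fin t, Fin (k i)) ≃ Fin n)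
    (he : ∀ (i : Fin t) (a : Fin (k i)),
      ((e ⟨i, a⟩ : Fin n) : ℕ) = (∑ l ∈ Finset.univ.filter fun l => l < i, k l) + (a : ℕ))
    (hdiag : cvGauge der P M = Matrix.reindex e e (Matrix.blockDiagonal' C))
    (Y : Fin n → F) :
    (fun r => der (Y r)) = M.mulVec Y ↔
    ∃ z : Fin t → F,
      (∀ (i : Fin t) (a : Fin (k i)), P.mulVec Y (e ⟨i, a⟩) = der^[(a : ℕ)] (z i)) ∧
      ∀ i : Fin t, der^[k i] (z i) =
        ∑ l : Fin (k i), C i ⟨k i - 1, Nat.sub_lt (hk0 i) Nat.one_pos⟩ l * der^[(l : ℕ)] (z i) :=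
  uncoupling_solutions_general der h_add h_mul M P hP k hk0 C hC e hdiag Y
end

section
/- Let K be a field of characteristic zero, n ≥ 1, and M ∈ M_n(K(X)). Then there exists a row vector u ∈ K[X]^n whose entries are polynomials of degree strictly less than n such that the n×n matrix Δ_n(u), whose rows are u, δ(u), ..., δ^{n−1}(u), is invertible over K(X); i.e., M admits a polynomial cyclic vector of degree less than n. -/
/-!
Write `M = A / d` with `A` a polynomial matrix and pick `l ∈ K` with `d(l) ≠ 0`. For a
polynomial row vector `v`, `d^k δ^k(v)` is again polynomial, `r_k(v)`, with
`r_{k+1} = r_k A + d r_k' - k d' r_k`. If `(X - l)^(i+k)` divides `v`, then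
`r_i(v) ≡ d^i v^{(i)}` modulo `(X - l)^(k+1)`. Hence adding `c (X - l)^m` to `v` leaves the
values `r_i(v)(l)`, `i < m`, unchanged and adds `m! d(l)^m c` to `r_m(v)(l)`. Choosing the
constant vectors `c` one degree at a time gives `v` of degree `< n` with `r_i(v)(l) = e_i`, so
`det (r_i(v))` does not vanish at `l`, and neither does
`det Δₙ(v) = det (r_i(v)) / d^(0+1+⋯+(n-1))`.
-/

open Polynomial

section ScaledDelta

variable {R : Type*} [CommRing R] {n : ℕ}

/-- The polynomial `r_k(v) = d ^ k • δ^k(v)` for `M = A / d` (`cvDelta_iterate_mul_pow`). -/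
noncomputable def scaledDeltaIter (A : Matrix (Fin n) (Fin n) R[X]) (d : R[X]) :
    ℕ → (Fin n → R[X]) → Fin n → R[X]
  | 0, v => v
  | k + 1, v => fun j => Matrix.vecMul (scaledDeltaIter A d k v) A j
      + d * derivative (scaledDeltaIter A d k v j) - k * derivative d * scaledDeltaIter A d k v j

variable (A : Matrix (Fin n) (Fin n) R[X]) (d : R[X])

@[simp]
theorem scaledDeltaIter_zero (v : Fin n → R[X]) : scaledDeltaIter A d 0 v = v := rfl

theorem scaledDeltaIter_succ_apply (k : ℕ) (v : Fin n → R[X]) (j : Fin n) :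
    scaledDeltaIter A d (k + 1) v j = ∑ a, scaledDeltaIter A d k v a * A a j
      + d * derivative (scaledDeltaIter A d k v j) - k * derivative d * scaledDeltaIter A d k v j :=
  rfl

theorem scaledDeltaIter_add (k : ℕ) (v w : Fin n → R[X]) :
    scaledDeltaIter A d k (v + w) = scaledDeltaIter A d k v + scaledDeltaIter A d k w := by
  induction k with
  | zero => rfl
  | succ k ih =>
    funext j
    simp only [scaledDeltaIter_succ_apply, ih, Pi.add_apply, derivative_add, add_mul,
      Finset.sum_add_distrib]
    ring

theorem pow_dvd_scaledDeltaIter {q : R[X]} {v : Fin n → R[X]} {i k : ℕ}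
    (hv : ∀ j, q ^ (i + k) ∣ v j) (j : Fin n) : q ^ k ∣ scaledDeltaIter A d i v j := by
  induction i generalizing k j with
  | zero => simpa using hv j
  | succ i ih =>
    have hr : ∀ j, q ^ (k + 1) ∣ scaledDeltaIter A d i v j :=
      ih fun j => by simpa [add_assoc, add_comm 1 k] using hv j
    have hr' : ∀ j, q ^ k ∣ scaledDeltaIter A d i v j :=
      fun j => (pow_dvd_pow q k.le_succ).trans (hr j)
    rw [scaledDeltaIter_succ_apply]
    refine dvd_sub (dvd_add ?_ ?_) ((hr' j).mul_left _)
    · exact Finset.dvd_sum fun a _ => (hr' a).mul_right _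
    · simpa using (pow_sub_one_dvd_derivative_of_pow_dvd (hr j)).mul_left d

theorem pow_dvd_scaledDeltaIter_sub {q : R[X]} {v : Fin n → R[X]} {i k : ℕ}
    (hv : ∀ j, q ^ (i + k) ∣ v j) (j : Fin n) :
    q ^ (k + 1) ∣ scaledDeltaIter A d i v j - d ^ i * derivative^[i] (v j) := by
  induction i generalizing k j with
  | zero => simp
  | succ i ih =>
    have hv' : ∀ j, q ^ (i + (k + 1)) ∣ v j := fun j => by
      simpa [add_assoc, add_comm 1 k] using hv j
    have hr : ∀ j, q ^ (k + 1) ∣ scaledDeltaIter A d i v j := pow_dvd_scaledDeltaIter A d hv'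
    have hdv : q ^ (k + 1) ∣ derivative^[i] (v j) := by
      simpa using pow_sub_dvd_iterate_derivative_of_pow_dvd i (hv' j)
    have he : q ^ (k + 1) ∣
        derivative (scaledDeltaIter A d i v j - d ^ i * derivative^[i] (v j)) := by
      simpa using pow_sub_one_dvd_derivative_of_pow_dvd (ih hv' j)
    have key : scaledDeltaIter A d (i + 1) v j - d ^ (i + 1) * derivative^[i + 1] (v j)
        = ∑ a, scaledDeltaIter A d i v a * A a j - i * derivative d * scaledDeltaIter A d i v j
          + d * derivative (scaledDeltaIter A d i v j - d ^ i * derivative^[i] (v j))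
          + d * derivative (d ^ i) * derivative^[i] (v j) := by
      rw [scaledDeltaIter_succ_apply, Function.iterate_succ_apply', derivative_sub,
        derivative_mul]
      ring
    rw [key]
    refine dvd_add (dvd_add (dvd_sub ?_ ((hr j).mul_left _)) (he.mul_left _)) (hdv.mul_left _)
    exact Finset.dvd_sum fun a _ => (hr a).mul_right _

theorem eval_scaledDeltaIter_of_pow_dvd {l : R} {v : Fin n → R[X]} {i m : ℕ}
    (hv : ∀ j, (X - C l) ^ m ∣ v j) (hi : i < m) (j : Fin n) :
    (scaledDeltaIter A d i v j).eval l = 0 := by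
  obtain ⟨k, rfl⟩ := Nat.exists_eq_add_of_lt hi
  have h := pow_dvd_scaledDeltaIter A d (k := k + 1) (by simpa [add_assoc] using hv) j
  exact dvd_iff_isRoot.mp ((dvd_pow_self _ k.succ_ne_zero).trans h)

theorem eval_scaledDeltaIter_C_mul_X_sub_C_pow (l : R) (c : Fin n → R) (m : ℕ) (j : Fin n) :
    (scaledDeltaIter A d m (fun j => C (c j) * (X - C l) ^ m) j).eval l
      = d.eval l ^ m * m.factorial * c j := by
  have h := pow_dvd_scaledDeltaIter_sub A d (q := X - C l) (i := m) (k := 0)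
    (v := fun j => C (c j) * (X - C l) ^ m) (fun j => dvd_mul_left _ _) j
  rw [zero_add, pow_one, dvd_iff_isRoot, IsRoot, eval_sub, sub_eq_zero] at h
  rw [h, iterate_derivative_C_mul, iterate_derivative_X_sub_pow_self]
  simp only [eval_mul, eval_pow, eval_C, eval_natCast]
  ring

end ScaledDelta

theorem exists_eval_scaledDeltaIter_eq {K : Type*} [Field K] [CharZero K] {n : ℕ}
    (A : Matrix (Fin n) (Fin n) K[X]) {d : K[X]} {l : K} (hd : d.eval l ≠ 0)
    (t : ℕ → Fin n → K) (m : ℕ) :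
    ∃ v : Fin n → K[X], (∀ j, (v j).degree < m) ∧
      ∀ i < m, ∀ j, (scaledDeltaIter A d i v j).eval l = t i j := by
  induction m with
  | zero => exact ⟨0, fun j => by simp, fun i hi => absurd hi i.not_lt_zero⟩
  | succ m ih =>
    obtain ⟨v, hdeg, hv⟩ := ih
    have hm : (m : WithBot ℕ) < ↑(m + 1) := by exact_mod_cast m.lt_succ_self
    have hdeg_pow (a : K) : (C a * (X - C l) ^ m).degree < ↑(m + 1) :=
      lt_of_le_of_lt (by compute_degree!) hm
    set c : Fin n → K := fun j =>
      (t m j - (scaledDeltaIter A d m v j).eval l) / (d.eval l ^ m * m.factorial)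
    refine ⟨v + fun j => C (c j) * (X - C l) ^ m, fun j => ?_, fun i hi j => ?_⟩
    · exact (degree_add_le _ _).trans_lt (max_lt ((hdeg j).trans hm) (hdeg_pow (c j)))
    · rw [scaledDeltaIter_add, Pi.add_apply, eval_add]
      rcases (Nat.lt_succ_iff.mp hi).lt_or_eq with hi | rfl
      · rw [hv i hi j, eval_scaledDeltaIter_of_pow_dvd A d (fun j => dvd_mul_left _ _) hi,
          add_zero]
      · have hc : d.eval l ^ i * i.factorial ≠ 0 :=
          mul_ne_zero (pow_ne_zero _ hd) (Nat.cast_ne_zero.mpr i.factorial_ne_zero)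
        rw [eval_scaledDeltaIter_C_mul_X_sub_C_pow, mul_div_cancel₀ _ hc, add_sub_cancel]

section RatFunc

variable {K : Type*} [Field K] (D : Derivation K (RatFunc K) (RatFunc K))

local notation "ρ" => algebraMap K[X] (RatFunc K)

theorem RatFunc.derivation_algebraMap (hD : D RatFunc.X = 1) (p : K[X]) :
    D (ρ p) = ρ (derivative p) := by
  rw [← RatFunc.aeval_X_left_eq_algebraMap, D.map_aeval, hD, smul_eq_mul, mul_one,
    RatFunc.aeval_X_left_eq_algebraMap]

theorem RatFunc.derivation_mul_algebraMap_pow (hD : D RatFunc.X = 1) {x : RatFunc K}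
    {d r : K[X]} {k : ℕ} (h : x * ρ d ^ k = ρ r) :
    D x * ρ d ^ (k + 1) = ρ (d * derivative r - k * derivative d * r) := by
  have h' := congrArg D h
  rw [D.leibniz, D.leibniz_pow, derivation_algebraMap D hD, derivation_algebraMap D hD,
    smul_eq_mul, smul_eq_mul, nsmul_eq_mul] at h'
  simp only [map_sub, map_mul, map_natCast]
  cases k with
  | zero =>
    simp only [pow_zero, mul_one, zero_add, one_smul] at h' h ⊢
    linear_combination ρ d * h'
  | succ k =>
    simp only [Nat.add_sub_cancel, smul_eq_mul] at h'
    push_cast at h' ⊢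
    linear_combination ρ d * h' - (k + 1 : RatFunc K) * ρ (derivative d) * h

variable {n : ℕ} {M : Matrix (Fin n) (Fin n) (RatFunc K)} {A : Matrix (Fin n) (Fin n) K[X]}
  {d : K[X]}

theorem cvDelta_iterate_mul_pow (hD : D RatFunc.X = 1) (hA : ∀ a b, ρ (A a b) = ρ d * M a b)
    (v : Fin n → K[X]) (i : ℕ) (j : Fin n) :
    (cvDelta D M)^[i] (fun j => ρ (v j)) j * ρ d ^ i = ρ (scaledDeltaIter A d i v j) := by
  induction i generalizing j with
  | zero => simp
  | succ i ih =>
    rw [Function.iterate_succ_apply', scaledDeltaIter_succ_apply]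
    set x := (cvDelta D M)^[i] (fun j => ρ (v j))
    have hsum : ∑ a, x a * M a j * ρ d ^ (i + 1) = ∑ a, x a * ρ d ^ i * (ρ d * M a j) :=
      Finset.sum_congr rfl fun a _ => by ring
    simp only [cvDelta, Pi.add_apply, Matrix.vecMul, dotProduct, add_mul, Finset.sum_mul,
      RatFunc.derivation_mul_algebraMap_pow D hD (ih j), map_sub, map_add, map_sum, map_mul,
      ← ih, hA]
    linear_combination hsum

theorem det_cvDelta_iterate_ne_zero (hD : D RatFunc.X = 1)
    (hA : ∀ a b, ρ (A a b) = ρ d * M a b) (v : Fin n → K[X])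
    (hv : (Matrix.of fun i j : Fin n => scaledDeltaIter A d i v j).det ≠ 0) :
    (Matrix.of fun i j : Fin n => (cvDelta D M)^[(i : ℕ)] (fun l => ρ (v l)) j).det ≠ 0 := by
  have hdiag : (Matrix.of fun i j : Fin n => scaledDeltaIter A d i v j).map ρ
      = Matrix.diagonal (fun i : Fin n => ρ d ^ (i : ℕ)) *
        Matrix.of fun i j : Fin n => (cvDelta D M)^[(i : ℕ)] (fun l => ρ (v l)) j := by
    ext i j
    rw [Matrix.diagonal_mul, Matrix.of_apply, mul_comm, cvDelta_iterate_mul_pow D hD hA]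
    rfl
  have hdet := congrArg Matrix.det hdiag
  rw [← RingHom.mapMatrix_apply, ← RingHom.map_det, Matrix.det_mul] at hdet
  exact right_ne_zero_of_mul (hdet ▸ (map_ne_zero_iff _ (RatFunc.algebraMap_injective K)).mpr hv)

end RatFunc

theorem exists_polynomial_cyclic_vector_general {K : Type*} [Field K] [CharZero K]
    {n : ℕ}
    (der : RatFunc K → RatFunc K)
    (h_add : ∀ a b : RatFunc K, der (a + b) = der a + der b)
    (h_mul : ∀ a b : RatFunc K, der (a * b) = a * der b + der a * b)
    (h_X : der RatFunc.X = 1)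
    (h_C : ∀ c : K, der (RatFunc.C c) = 0)
    (M : Matrix (Fin n) (Fin n) (RatFunc K)) :
    ∃ u : Fin n → Polynomial K,
      (∀ j, (u j).degree < (n : WithBot ℕ)) ∧
      IsUnit (Matrix.of fun i j : Fin n =>
        (cvDelta der M)^[(i : ℕ)]
          (fun l => algebraMap (Polynomial K) (RatFunc K) (u l)) j).det := by
  obtain ⟨D, rfl⟩ : ∃ D : Derivation K (RatFunc K) (RatFunc K), ⇑D = der := by
    refine ⟨Derivation.mk' ⟨⟨der, h_add⟩, fun c f => ?_⟩ fun a b => ?_, rfl⟩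
    · simp [Algebra.smul_def, RatFunc.algebraMap_eq_C, h_mul, h_C]
    · simp [h_mul, mul_comm]
  obtain ⟨⟨d, hd⟩, hdM⟩ := IsLocalization.exist_integer_multiples (nonZeroDivisors K[X])
    Finset.univ fun ab : Fin n × Fin n => M ab.1 ab.2
  choose A hA using fun a b => hdM (a, b) (Finset.mem_univ _)
  obtain ⟨l, hl⟩ : ∃ l, d.eval l ≠ 0 := by
    by_contra! h
    exact nonZeroDivisors.ne_zero hd (zero_of_eval_zero d h)
  obtain ⟨v, hdeg, hv⟩ := exists_eval_scaledDeltaIter_eq (Matrix.of A) hl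
    (fun i j => if (j : ℕ) = i then 1 else 0) n
  set S : Matrix (Fin n) (Fin n) K[X] :=
    Matrix.of fun i j => scaledDeltaIter (Matrix.of A) d i v j
  have hS : S.map (eval l) = 1 := by
    ext i j
    simp [S, hv i i.2 j, Matrix.one_apply, Fin.val_inj, eq_comm]
  refine ⟨v, hdeg, isUnit_iff_ne_zero.mpr <| det_cvDelta_iterate_ne_zero D h_X
    (fun a b => (hA a b).trans (Algebra.smul_def _ _)) v fun h => ?_⟩
  simpa [show S.det = 0 from h, hS] using (evalRingHom l).map_det S

/-- Every `M ∈ Mₙ(K(X))` admits a polynomial cyclic vector of degree `< n`: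
there is a row vector `u` of polynomials of degree `< n` such that the matrix
`Δₙ(u)` with rows `u, δ(u), …, δ^{n−1}(u)` is invertible over `K(X)`.
Here `der` is the (unique) derivation of `K(X)` extending `d/dX`. -/
theorem exists_polynomial_cyclic_vector {K : Type*} [Field K] [CharZero K]
    {n : ℕ} (hn : 1 ≤ n)
    (der : RatFunc K → RatFunc K)
    (h_add : ∀ a b : RatFunc K, der (a + b) = der a + der b)
    (h_mul : ∀ a b : RatFunc K, der (a * b) = a * der b + der a * b)
    (h_X : der RatFunc.X = 1)
    (h_C : ∀ c : K, der (RatFunc.C c) = 0)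
    (M : Matrix (Fin n) (Fin n) (RatFunc K)) :
    ∃ u : Fin n → Polynomial K,
      (∀ j, (u j).degree < (n : WithBot ℕ)) ∧
      IsUnit (Matrix.of fun i j : Fin n =>
        (cvDelta der M)^[(i : ℕ)]
          (fun l => algebraMap (Polynomial K) (RatFunc K) (u l)) j).det :=
  exists_polynomial_cyclic_vector_general der h_add h_mul h_X h_C M
end

section
/- Let K be a field of characteristic zero, let q ∈ K[X] be a nonzero polynomial, and let M ∈ M_n(K(X)) be such that qM has polynomial entries of degree at most d, with deg(q) ≤ d. Let u ∈ K[X]^n be a row vector with polynomial entries. Then for every k ≥ 0, the row vector q^k δ^k(u) has polynomial entries, of degree at most deg(u) + k·d, where deg(u) is the maximum of the degrees of the entries of u. -/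
open Polynomial

namespace Polynomial

theorem mul_derivative_pow {R : Type*} [CommSemiring R] (q : R[X]) (k : ℕ) :
    q * derivative (q ^ k) = k * derivative q * q ^ k := by
  cases k with
  | zero => simp
  | succ k =>
    rw [derivative_pow_succ, ← map_natCast C, Nat.cast_succ]
    ring

theorem degree_derivative_mul_le {R : Type*} [Semiring R] (p q : R[X]) :
    degree (derivative p * q) ≤ degree p + degree q :=
  (degree_mul_le _ _).trans (add_le_add_left degree_derivative_le _)

end Polynomial

theorem Matrix.pow_succ_mul_vecMul_apply {ι κ S : Type*} [Fintype ι] [CommSemiring S] {a : S}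
    {k : ℕ} {w v : ι → S} {M N : Matrix ι κ S} (hv : ∀ l, a ^ k * w l = v l)
    (hN : ∀ i j, a * M i j = N i j) (j : κ) :
    a ^ (k + 1) * Matrix.vecMul w M j = Matrix.vecMul v N j := by
  simp only [Matrix.vecMul, dotProduct, Finset.mul_sum, ← hv, ← hN]
  exact Finset.sum_congr rfl fun l _ => by ring

namespace RatFunc

variable {K : Type*} [Field K]

theorem der_algebraMap_eq_derivative (der : RatFunc K → RatFunc K)
    (h_add : ∀ a b : RatFunc K, der (a + b) = der a + der b)
    (h_mul : ∀ a b : RatFunc K, der (a * b) = a * der b + der a * b)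
    (h_X : der RatFunc.X = 1)
    (h_C : ∀ c : K, der (RatFunc.C c) = 0) (r : K[X]) :
    der (algebraMap K[X] (RatFunc K) r) = algebraMap K[X] (RatFunc K) (derivative r) := by
  induction r using Polynomial.induction_on with
  | C a => simp [RatFunc.algebraMap_C, h_C]
  | add p q hp hq => simp [h_add, hp, hq]
  | monomial m a ih =>
    rw [pow_succ, ← mul_assoc, map_mul, h_mul, ih, RatFunc.algebraMap_X, h_X]
    simp only [derivative_mul, derivative_X, derivative_C, map_add, map_mul, map_pow,
      algebraMap_C, algebraMap_X, mul_one, zero_mul, zero_add]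
    ring

theorem pow_succ_mul_der_eq {der : RatFunc K → RatFunc K}
    (h_mul : ∀ a b : RatFunc K, der (a * b) = a * der b + der a * b)
    (hder : ∀ r : K[X], der (algebraMap K[X] (RatFunc K) r) = algebraMap K[X] (RatFunc K) r.derivative)
    {q p : K[X]} {k : ℕ} {x : RatFunc K}
    (hp : algebraMap K[X] (RatFunc K) q ^ k * x = algebraMap K[X] (RatFunc K) p) :
    algebraMap K[X] (RatFunc K) q ^ (k + 1) * der x
      = algebraMap K[X] (RatFunc K) (q * derivative p - k * derivative q * p) := by
  set A := algebraMap K[X] (RatFunc K)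
  have hleib := h_mul (A q ^ k) x
  rw [hp, hder, ← map_pow, hder] at hleib
  calc A q ^ (k + 1) * der x = A q * A (derivative p) - A (q * derivative (q ^ k)) * x := by
        rw [hleib, map_mul, map_pow]; ring
    _ = A q * A (derivative p) - A (k * derivative q) * (A q ^ k * x) := by
        rw [mul_derivative_pow, map_mul, map_mul, map_pow]; ring
    _ = A (q * derivative p - k * derivative q * p) := by
        simp only [hp, map_sub, map_mul]

end RatFunc

section DeltaNumerator

variable {K : Type*} [Field K] {n : ℕ}

/-- The polynomial vector `q ^ (k + 1) δ(w)` when `q ^ k w = p` and `q M = m`. -/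
noncomputable def deltaNumerator (q : K[X]) (m : Matrix (Fin n) (Fin n) K[X]) (k : ℕ)
    (p : Fin n → K[X]) (j : Fin n) : K[X] :=
  Matrix.vecMul p m j + q * derivative (p j) - k * derivative q * p j

theorem pow_succ_mul_cvDelta_apply {der : RatFunc K → RatFunc K}
    (h_mul : ∀ a b : RatFunc K, der (a * b) = a * der b + der a * b)
    (hder : ∀ r : K[X], der (algebraMap K[X] (RatFunc K) r) = algebraMap K[X] (RatFunc K) r.derivative)
    {q : K[X]} {M : Matrix (Fin n) (Fin n) (RatFunc K)} {m : Matrix (Fin n) (Fin n) K[X]}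
    (hm : ∀ i j, algebraMap K[X] (RatFunc K) q * M i j = algebraMap K[X] (RatFunc K) (m i j))
    {k : ℕ} {w : Fin n → RatFunc K} {p : Fin n → K[X]}
    (hp : ∀ l, algebraMap K[X] (RatFunc K) q ^ k * w l = algebraMap K[X] (RatFunc K) (p l))
    (j : Fin n) :
    algebraMap K[X] (RatFunc K) q ^ (k + 1) * cvDelta der M w j
      = algebraMap K[X] (RatFunc K) (deltaNumerator q m k p j) := by
  rw [cvDelta, Pi.add_apply, mul_add,
    Matrix.pow_succ_mul_vecMul_apply (N := m.map (algebraMap K[X] (RatFunc K))) hp hm,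
    RatFunc.pow_succ_mul_der_eq h_mul hder (hp j), deltaNumerator, add_sub_assoc,
    map_add, RingHom.map_vecMul]
  rfl

theorem degree_deltaNumerator_le {q : K[X]} {m : Matrix (Fin n) (Fin n) K[X]} {p : Fin n → K[X]}
    {N d : ℕ} (hq : q.degree ≤ d) (hm : ∀ i j, (m i j).degree ≤ d) (hp : ∀ l, (p l).degree ≤ N)
    (k : ℕ) (j : Fin n) : (deltaNumerator q m k p j).degree ≤ (N + d : ℕ) := by
  simp only [deltaNumerator, Matrix.vecMul, dotProduct, Nat.cast_add]
  refine (degree_sub_le _ _).trans (max_le ((degree_add_le _ _).trans (max_le ?_ ?_)) ?_)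
  · refine (degree_sum_le _ _).trans (Finset.sup_le fun l _ => ?_)
    exact (degree_mul_le _ _).trans (add_le_add (hp l) (hm l j))
  · rw [add_comm]
    exact (degree_mul_le _ _).trans (add_le_add hq (degree_derivative_le.trans (hp j)))
  · calc (k * derivative q * p j).degree
        ≤ (k : K[X]).degree + (derivative q * p j).degree := by
          rw [mul_assoc]; exact degree_mul_le _ _
      _ ≤ 0 + (q.degree + (p j).degree) :=
          add_le_add (degree_natCast_le k) (degree_derivative_mul_le _ _)
      _ ≤ N + d := by rw [zero_add, add_comm]; exact add_le_add (hp j) hq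

end DeltaNumerator

theorem qk_deltak_polynomial_degree_general {K : Type*} [Field K] {n : ℕ}
    (der : RatFunc K → RatFunc K)
    (h_add : ∀ a b : RatFunc K, der (a + b) = der a + der b)
    (h_mul : ∀ a b : RatFunc K, der (a * b) = a * der b + der a * b)
    (h_X : der RatFunc.X = 1)
    (h_C : ∀ c : K, der (RatFunc.C c) = 0)
    (q : Polynomial K) (d : ℕ) (hqd : q.degree ≤ (d : WithBot ℕ))
    (M : Matrix (Fin n) (Fin n) (RatFunc K))
    (hM : ∀ i j : Fin n, ∃ p : Polynomial K, p.degree ≤ (d : WithBot ℕ) ∧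
      algebraMap (Polynomial K) (RatFunc K) q * M i j
        = algebraMap (Polynomial K) (RatFunc K) p)
    (u : Fin n → Polynomial K) (k : ℕ) :
    ∀ j : Fin n, ∃ p : Polynomial K,
      p.degree ≤ (((Finset.univ.sup fun l => (u l).natDegree) + k * d : ℕ) : WithBot ℕ) ∧
      (algebraMap (Polynomial K) (RatFunc K) q) ^ k *
        (cvDelta der M)^[k] (fun l => algebraMap (Polynomial K) (RatFunc K) (u l)) j
        = algebraMap (Polynomial K) (RatFunc K) p := by
  have hder := RatFunc.der_algebraMap_eq_derivative der h_add h_mul h_X h_C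
  choose m hm_deg hm using hM
  induction k with
  | zero =>
    refine fun j => ⟨u j, ?_, by simp⟩
    simpa using degree_le_of_natDegree_le
      (Finset.le_sup (f := fun l => (u l).natDegree) (Finset.mem_univ j))
  | succ k ih =>
    choose p hp_deg hp using ih
    refine fun j => ⟨deltaNumerator q m k p j, ?_, ?_⟩
    · rw [add_mul, one_mul, ← add_assoc]
      exact degree_deltaNumerator_le hqd hm_deg hp_deg k j
    · rw [Function.iterate_succ_apply']
      exact pow_succ_mul_cvDelta_apply h_mul hder hm hp j

/-- If `q M` has polynomial entries of degree `≤ d` with `deg q ≤ d` and `u` is a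
row vector of polynomials, then `q^k δ^k(u)` has polynomial entries of degree at
most `deg u + k d`.  Here `der` is the derivation of `K(X)` extending `d/dX`. -/
theorem qk_deltak_polynomial_degree {K : Type*} [Field K] [CharZero K] {n : ℕ}
    (der : RatFunc K → RatFunc K)
    (h_add : ∀ a b : RatFunc K, der (a + b) = der a + der b)
    (h_mul : ∀ a b : RatFunc K, der (a * b) = a * der b + der a * b)
    (h_X : der RatFunc.X = 1)
    (h_C : ∀ c : K, der (RatFunc.C c) = 0)
    (q : Polynomial K) (hq : q ≠ 0) (d : ℕ) (hqd : q.degree ≤ (d : WithBot ℕ))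
    (M : Matrix (Fin n) (Fin n) (RatFunc K))
    (hM : ∀ i j : Fin n, ∃ p : Polynomial K, p.degree ≤ (d : WithBot ℕ) ∧
      algebraMap (Polynomial K) (RatFunc K) q * M i j
        = algebraMap (Polynomial K) (RatFunc K) p)
    (u : Fin n → Polynomial K) (k : ℕ) :
    ∀ j : Fin n, ∃ p : Polynomial K,
      p.degree ≤ (((Finset.univ.sup fun l => (u l).natDegree) + k * d : ℕ) : WithBot ℕ) ∧
      (algebraMap (Polynomial K) (RatFunc K) q) ^ k *
        (cvDelta der M)^[k] (fun l => algebraMap (Polynomial K) (RatFunc K) (u l)) j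
        = algebraMap (Polynomial K) (RatFunc K) p :=
  qk_deltak_polynomial_degree_general der h_add h_mul h_X h_C q d hqd M hM u k
end

section
/- Let K be a field of characteristic zero, let q ∈ K[X] be nonzero with deg(q) ≤ d, and let M ∈ M_n(K(X)) be such that qM has polynomial entries of degree at most d. Let u ∈ K[X]^n be a row vector with polynomial entries, and let P = Δ_n(u) be the n×n matrix with rows u, δ(u), ..., δ^{n−1}(u). Then: (1) q^{n−1}·P has polynomial entries of degree at most deg(u) + (n−1)d; (2) if P is invertible, then every entry of P⁻¹ has degree (as a rational function) at most n·deg(u) + n(n−1)d/2. -/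
/-- `Δₙ(u)`: the `n × n` matrix whose rows are `u, δ(u), …, δ^{n−1}(u)`. -/
def cvDeltaMat {F : Type*} [Field F] {n : ℕ} (der : F → F)
    (M : Matrix (Fin n) (Fin n) F) (u : Fin n → F) : Matrix (Fin n) (Fin n) F :=
  Matrix.of fun i j => (cvDelta der M)^[(i : ℕ)] u j

/-- The degree of a rational function: the maximum of the degrees of its
numerator and denominator written in lowest terms. -/
noncomputable def ratFuncDeg {K : Type*} [Field K] (f : RatFunc K) : ℕ :=
  max f.num.natDegree f.denom.natDegree

/-!
Write `S_N ⊆ K(X)` for the polynomials of degree `≤ N`. A map `der` as in the statement is a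
`K`-derivation with `der X = 1`, so it agrees with `d/dX` on `K[X]` and preserves every `S_N`.
If `q^i v` has entries in `S_N`, then
`q^{i+1} δ(v) = (q^i v)(qM) + q · der(q^i v) - i · der(q) · (q^i v)`
has entries in `S_{N+d}`; hence row `k` of `P` scaled by `q^k` lies in `S_{deg u + k d}`, and
part (1) follows after multiplying by `q^{n-1-k}`. For part (2), scaling row `k` by `q^k`
multiplies `det P` and each cofactor `adj(P)_{ij}` (the determinant of `P` with row `j` replaced
by the `i`-th unit vector) by the same factor `∏ₖ q^k`, and the Leibniz expansion puts both
products in `S_{∑ₖ (deg u + k d)}`. So `P⁻¹_{ij}` is a quotient of two polynomials of degree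
`≤ n deg u + n(n-1)d/2`.
-/

open scoped Polynomial

def Derivation.ofLeibniz {R A : Type*} [CommSemiring R] [CommRing A] [Algebra R A]
    (der : A → A) (h_add : ∀ a b, der (a + b) = der a + der b)
    (h_mul : ∀ a b, der (a * b) = a * der b + der a * b)
    (h_algebraMap : ∀ c, der (algebraMap R A c) = 0) : Derivation R A A :=
  Derivation.mk'
    ({ toFun := der
       map_add' := h_add
       map_smul' := fun c f => by simp [Algebra.smul_def, h_mul, h_algebraMap] } : A →ₗ[R] A)
    fun a b => by simp [h_mul, mul_comm]

theorem Derivation.mul_apply_pow_mul {R A : Type*} [CommSemiring R] [CommSemiring A] [Algebra R A]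
    (D : Derivation R A A) (a b : A) (i : ℕ) :
    a * D (a ^ i * b) = a ^ (i + 1) * D b + i • (D a * (a ^ i * b)) := by
  rcases i with _ | i
  · simp
  · simp only [D.leibniz, D.leibniz_pow, smul_eq_mul, nsmul_eq_mul, Nat.add_sub_cancel]
    ring

namespace RatFunc

variable {K : Type*} [Field K]

variable (K) in
noncomputable def degreeLE (N : ℕ) : Submodule K (RatFunc K) :=
  (Polynomial.degreeLE K N).map (IsScalarTower.toAlgHom K K[X] (RatFunc K)).toLinearMap

theorem mem_degreeLE {N : ℕ} {f : RatFunc K} :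
    f ∈ degreeLE K N ↔ ∃ p : K[X], p.degree ≤ N ∧ algebraMap K[X] (RatFunc K) p = f := by
  simp [degreeLE, Polynomial.mem_degreeLE]

theorem algebraMap_mem_degreeLE {N : ℕ} {p : K[X]} (hp : p.degree ≤ N) :
    algebraMap K[X] (RatFunc K) p ∈ degreeLE K N :=
  mem_degreeLE.2 ⟨p, hp, rfl⟩

theorem degreeLE_mono {N N' : ℕ} (h : N ≤ N') : degreeLE K N ≤ degreeLE K N' := fun _ hf => by
  obtain ⟨p, hp, rfl⟩ := mem_degreeLE.1 hf
  exact algebraMap_mem_degreeLE (hp.trans (by exact_mod_cast h))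

theorem mul_mem_degreeLE {a b : ℕ} {f g : RatFunc K} (hf : f ∈ degreeLE K a)
    (hg : g ∈ degreeLE K b) : f * g ∈ degreeLE K (a + b) := by
  obtain ⟨p, hp, rfl⟩ := mem_degreeLE.1 hf
  obtain ⟨r, hr, rfl⟩ := mem_degreeLE.1 hg
  rw [← map_mul]
  exact algebraMap_mem_degreeLE
    ((Polynomial.degree_mul_le p r).trans (by push_cast; exact add_le_add hp hr))

theorem one_mem_degreeLE_zero : (1 : RatFunc K) ∈ degreeLE K 0 := by
  simpa using algebraMap_mem_degreeLE (K := K) (p := 1) (N := 0) Polynomial.degree_one_le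

theorem prod_mem_degreeLE {ι : Type*} (s : Finset ι) {f : ι → RatFunc K} {a : ι → ℕ}
    (h : ∀ i ∈ s, f i ∈ degreeLE K (a i)) :
    ∏ i ∈ s, f i ∈ degreeLE K (∑ i ∈ s, a i) := by
  classical
  induction s using Finset.induction_on with
  | empty => simpa using one_mem_degreeLE_zero
  | insert i s hi ih =>
    rw [Finset.prod_insert hi, Finset.sum_insert hi]
    exact mul_mem_degreeLE (h i (s.mem_insert_self i))
      (ih fun j hj => h j (Finset.mem_insert_of_mem hj))

theorem pow_mem_degreeLE {a : ℕ} {f : RatFunc K} (hf : f ∈ degreeLE K a) (k : ℕ) :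
    f ^ k ∈ degreeLE K (k * a) := by
  simpa using prod_mem_degreeLE (Finset.range k) (a := fun _ => a) fun _ _ => hf

theorem prod_mul_det_mem_degreeLE {n : ℕ} (A : Matrix (Fin n) (Fin n) (RatFunc K))
    {c : Fin n → RatFunc K} {b : Fin n → ℕ} (h : ∀ k l, c k * A k l ∈ degreeLE K (b k)) :
    (∏ k, c k) * A.det ∈ degreeLE K (∑ k, b k) := by
  rw [Matrix.det_apply, Finset.mul_sum]
  refine Submodule.sum_mem _ fun σ _ => ?_
  rw [mul_smul_comm, ← Equiv.prod_comp σ c, ← Finset.prod_mul_distrib, ← Equiv.sum_comp σ b]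
  exact Submodule.smul_of_tower_mem _ _ (prod_mem_degreeLE _ fun k _ => h (σ k) k)

theorem derivation_algebraMap_s9 {D : Derivation K (RatFunc K) (RatFunc K)} (hX : D X = 1)
    (p : K[X]) :
    D (algebraMap K[X] (RatFunc K) p) = algebraMap K[X] (RatFunc K) (Polynomial.derivative p) := by
  have h : D.compAlgebraMap K[X] = Polynomial.mkDerivation K (1 : RatFunc K) :=
    Polynomial.derivation_ext (by simp [hX])
  simpa [Polynomial.mkDerivation_apply, Algebra.smul_def] using DFunLike.congr_fun h p

theorem derivation_mem_degreeLE {D : Derivation K (RatFunc K) (RatFunc K)} (hX : D X = 1)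
    {N : ℕ} {f : RatFunc K} (hf : f ∈ degreeLE K N) : D f ∈ degreeLE K N := by
  obtain ⟨p, hp, rfl⟩ := mem_degreeLE.1 hf
  rw [derivation_algebraMap_s9 hX]
  exact algebraMap_mem_degreeLE (Polynomial.degree_derivative_le.trans hp)

section CyclicVector

variable {n d : ℕ} {D : Derivation K (RatFunc K) (RatFunc K)}
  {q : RatFunc K} {M : Matrix (Fin n) (Fin n) (RatFunc K)}

theorem pow_succ_mul_cvDelta_mem_degreeLE (hX : D X = 1) (hq : q ∈ degreeLE K d)
    (hM : ∀ l j, q * M l j ∈ degreeLE K d) {N i : ℕ} {v : Fin n → RatFunc K}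
    (hv : ∀ j, q ^ i * v j ∈ degreeLE K N) (j : Fin n) :
    q ^ (i + 1) * cvDelta D M v j ∈ degreeLE K (N + d) := by
  have hsplit : q ^ (i + 1) * cvDelta D M v j
      = ∑ l, q ^ i * v l * (q * M l j) + (q * D (q ^ i * v j) - i • (D q * (q ^ i * v j))) := by
    rw [D.mul_apply_pow_mul]
    simp only [cvDelta, Pi.add_apply, Matrix.vecMul, dotProduct, mul_add, Finset.mul_sum]
    congr 1
    · exact Finset.sum_congr rfl fun l _ => by ring
    · abel
  rw [hsplit, add_comm N]
  refine add_mem (Submodule.sum_mem _ fun l _ => ?_)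
    (sub_mem ?_ (Submodule.smul_of_tower_mem _ _ ?_))
  · rw [add_comm]
    exact mul_mem_degreeLE (hv l) (hM l j)
  · exact mul_mem_degreeLE hq (derivation_mem_degreeLE hX (hv j))
  · exact mul_mem_degreeLE (derivation_mem_degreeLE hX hq) (hv j)

theorem pow_mul_iterate_cvDelta_mem_degreeLE (hX : D X = 1) (hq : q ∈ degreeLE K d)
    (hM : ∀ l j, q * M l j ∈ degreeLE K d) {N : ℕ} {u : Fin n → RatFunc K}
    (hu : ∀ j, u j ∈ degreeLE K N) (i : ℕ) (j : Fin n) :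
    q ^ i * (cvDelta D M)^[i] u j ∈ degreeLE K (N + i * d) := by
  induction i generalizing j with
  | zero => simpa using hu j
  | succ i ih =>
    rw [Function.iterate_succ_apply', add_mul, one_mul, ← add_assoc]
    exact pow_succ_mul_cvDelta_mem_degreeLE hX hq hM ih j

end CyclicVector

end RatFunc

theorem ratFuncDeg_div_le_of_mem_degreeLE {K : Type*} [Field K] {N : ℕ} {f g : RatFunc K}
    (hf : f ∈ RatFunc.degreeLE K N) (hg : g ∈ RatFunc.degreeLE K N) :
    ratFuncDeg (f / g) ≤ N := by
  obtain ⟨p, hp, rfl⟩ := RatFunc.mem_degreeLE.1 hf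
  obtain ⟨r, hr, rfl⟩ := RatFunc.mem_degreeLE.1 hg
  rcases eq_or_ne p 0 with rfl | hp0
  · simp [ratFuncDeg]
  rcases eq_or_ne r 0 with rfl | hr0
  · simp [ratFuncDeg]
  exact max_le
    ((Polynomial.natDegree_le_of_dvd (RatFunc.num_div_dvd p hr0) hp0).trans
      (Polynomial.natDegree_le_of_degree_le hp))
    ((Polynomial.natDegree_le_of_dvd (RatFunc.denom_div_dvd p r) hr0).trans
      (Polynomial.natDegree_le_of_degree_le hr))

theorem ratFuncDeg_inv_apply_le {K : Type*} [Field K] {n : ℕ}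
    (A : Matrix (Fin n) (Fin n) (RatFunc K)) {c : Fin n → RatFunc K} {b : Fin n → ℕ}
    (hc0 : ∀ k, c k ≠ 0) (hc : ∀ k, c k ∈ RatFunc.degreeLE K (b k))
    (hA : ∀ k l, c k * A k l ∈ RatFunc.degreeLE K (b k)) (i j : Fin n) :
    ratFuncDeg (A⁻¹ i j) ≤ ∑ k, b k := by
  have hcramer : A⁻¹ i j
      = (∏ k, c k) * (A.updateRow j (Pi.single i 1)).det / ((∏ k, c k) * A.det) := by
    rw [Matrix.inv_def, Ring.inverse_eq_inv', Matrix.smul_apply, smul_eq_mul, inv_mul_eq_div,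
      Matrix.adjugate_apply, mul_div_mul_left _ _ (Finset.prod_ne_zero_iff.2 fun k _ => hc0 k)]
  rw [hcramer]
  refine ratFuncDeg_div_le_of_mem_degreeLE
    (RatFunc.prod_mul_det_mem_degreeLE _ fun k l => ?_) (RatFunc.prod_mul_det_mem_degreeLE A hA)
  rcases eq_or_ne k j with rfl | hkj
  · rw [Matrix.updateRow_self, Pi.single_apply]
    split_ifs
    · simpa using hc k
    · simp
  · rw [Matrix.updateRow_ne hkj]
    exact hA k l

open RatFunc

theorem cyclic_vector_matrix_degree_bounds_general {K : Type*} [Field K] {n : ℕ}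
    (der : RatFunc K → RatFunc K)
    (h_add : ∀ a b : RatFunc K, der (a + b) = der a + der b)
    (h_mul : ∀ a b : RatFunc K, der (a * b) = a * der b + der a * b)
    (h_X : der RatFunc.X = 1)
    (h_C : ∀ c : K, der (RatFunc.C c) = 0)
    (q : Polynomial K) (hq : q ≠ 0) (d : ℕ) (hqd : q.degree ≤ (d : WithBot ℕ))
    (M : Matrix (Fin n) (Fin n) (RatFunc K))
    (hM : ∀ i j : Fin n, ∃ p : Polynomial K, p.degree ≤ (d : WithBot ℕ) ∧
      algebraMap (Polynomial K) (RatFunc K) q * M i j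
        = algebraMap (Polynomial K) (RatFunc K) p)
    (u : Fin n → Polynomial K) :
    (∀ i j : Fin n, ∃ p : Polynomial K,
      p.degree ≤ (((Finset.univ.sup fun l => (u l).natDegree) + (n - 1) * d : ℕ) : WithBot ℕ) ∧
      (algebraMap (Polynomial K) (RatFunc K) q) ^ (n - 1) *
        cvDeltaMat der M (fun l => algebraMap (Polynomial K) (RatFunc K) (u l)) i j
        = algebraMap (Polynomial K) (RatFunc K) p) ∧
    (IsUnit (cvDeltaMat der M (fun l => algebraMap (Polynomial K) (RatFunc K) (u l))).det →
      ∀ i j : Fin n,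
        ratFuncDeg ((cvDeltaMat der M (fun l => algebraMap (Polynomial K) (RatFunc K) (u l)))⁻¹ i j)
          ≤ n * (Finset.univ.sup fun l => (u l).natDegree) + n * (n - 1) / 2 * d) := by
  set du := Finset.univ.sup fun l => (u l).natDegree
  let D : Derivation K (RatFunc K) (RatFunc K) :=
    Derivation.ofLeibniz der h_add h_mul (by simpa [algebraMap_eq_C] using h_C)
  have hq' : algebraMap K[X] (RatFunc K) q ∈ degreeLE K d := algebraMap_mem_degreeLE hqd
  have hqM : ∀ l j, algebraMap K[X] (RatFunc K) q * M l j ∈ degreeLE K d := fun l j => by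
    obtain ⟨p, hp, e⟩ := hM l j
    exact e ▸ algebraMap_mem_degreeLE hp
  have hu : ∀ j, algebraMap K[X] (RatFunc K) (u j) ∈ degreeLE K du := fun j =>
    algebraMap_mem_degreeLE (Polynomial.degree_le_natDegree.trans
      (by exact_mod_cast Finset.le_sup (f := fun l => (u l).natDegree) (Finset.mem_univ j)))
  have hrows : ∀ k l : Fin n, algebraMap K[X] (RatFunc K) q ^ (k : ℕ) *
      cvDeltaMat der M (fun l => algebraMap K[X] (RatFunc K) (u l)) k l
        ∈ degreeLE K (du + k * d) :=
    fun k l => pow_mul_iterate_cvDelta_mem_degreeLE (D := D) h_X hq' hqM hu k l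
  refine ⟨fun i j => ?_, fun _ i j => ?_⟩
  · have hi : (i : ℕ) ≤ n - 1 := by omega
    have h := mul_mem_degreeLE (pow_mem_degreeLE hq' (n - 1 - i)) (hrows i j)
    rw [← mul_assoc, ← pow_add, Nat.sub_add_cancel hi] at h
    have hbound : (n - 1 - i) * d + (du + i * d) = du + (n - 1) * d := by
      rw [add_left_comm, ← add_mul, Nat.sub_add_cancel hi]
    obtain ⟨p, hp, e⟩ := mem_degreeLE.1 (hbound ▸ h)
    exact ⟨p, hp, e.symm⟩
  · have hsum : ∑ k : Fin n, (du + k * d) = n * du + n * (n - 1) / 2 * d := by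
      rw [Finset.sum_add_distrib, ← Finset.sum_mul, Fin.sum_univ_eq_sum_range (fun k => k),
        Finset.sum_range_id]
      simp
    have hq0 : algebraMap K[X] (RatFunc K) q ≠ 0 := by simpa using hq
    exact hsum ▸ ratFuncDeg_inv_apply_le _ (fun k => pow_ne_zero _ hq0)
      (fun k => degreeLE_mono (Nat.le_add_left _ _) (pow_mem_degreeLE hq' k)) hrows i j

/-- Degree bounds for `P = Δₙ(u)` in the cyclic-vector method:
`q^{n−1} P` has polynomial entries of degree `≤ deg u + (n−1)d`, and if `P` is
invertible then the entries of `P⁻¹` have degree `≤ n·deg u + n(n−1)d/2`. -/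
theorem cyclic_vector_matrix_degree_bounds {K : Type*} [Field K] [CharZero K] {n : ℕ}
    (der : RatFunc K → RatFunc K)
    (h_add : ∀ a b : RatFunc K, der (a + b) = der a + der b)
    (h_mul : ∀ a b : RatFunc K, der (a * b) = a * der b + der a * b)
    (h_X : der RatFunc.X = 1)
    (h_C : ∀ c : K, der (RatFunc.C c) = 0)
    (q : Polynomial K) (hq : q ≠ 0) (d : ℕ) (hqd : q.degree ≤ (d : WithBot ℕ))
    (M : Matrix (Fin n) (Fin n) (RatFunc K))
    (hM : ∀ i j : Fin n, ∃ p : Polynomial K, p.degree ≤ (d : WithBot ℕ) ∧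
      algebraMap (Polynomial K) (RatFunc K) q * M i j
        = algebraMap (Polynomial K) (RatFunc K) p)
    (u : Fin n → Polynomial K) :
    (∀ i j : Fin n, ∃ p : Polynomial K,
      p.degree ≤ (((Finset.univ.sup fun l => (u l).natDegree) + (n - 1) * d : ℕ) : WithBot ℕ) ∧
      (algebraMap (Polynomial K) (RatFunc K) q) ^ (n - 1) *
        cvDeltaMat der M (fun l => algebraMap (Polynomial K) (RatFunc K) (u l)) i j
        = algebraMap (Polynomial K) (RatFunc K) p) ∧
    (IsUnit (cvDeltaMat der M (fun l => algebraMap (Polynomial K) (RatFunc K) (u l))).det →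
      ∀ i j : Fin n,
        ratFuncDeg ((cvDeltaMat der M (fun l => algebraMap (Polynomial K) (RatFunc K) (u l)))⁻¹ i j)
          ≤ n * (Finset.univ.sup fun l => (u l).natDegree) + n * (n - 1) / 2 * d) :=
  cyclic_vector_matrix_degree_bounds_general der h_add h_mul h_X h_C q hq d hqd M hM u
end

section
/- Let K be a field of characteristic zero, let q ∈ K[X] be nonzero with deg(q) ≤ d, and let M ∈ M_n(K(X)) be such that qM has polynomial entries of degree at most d. Let u ∈ K[X]^n be a row vector with polynomial entries, and suppose that P = Δ_n(u) (the matrix with rows u, δ(u), ..., δ^{n−1}(u)) is invertible. Then every entry of the row vector δ^n(u)·P⁻¹ (the last row of the companion matrix gauge-similar to M produced by the cyclic-vector method) has degree, as a rational function, at most n·deg(u) + n(n+1)d/2. -/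
/-!
Write `v k = q^k δ^k(u)` (`scaledIterate q N u k`). Since `N = qM` is polynomial,
`v (k+1) = v k N + q (v k)′ - k q′ (v k)`, so each `v k` is a polynomial vector of degree at
most `deg u + k d`. Multiplying row `i` of `P = Δₙ(u)` by `q^i` gives the polynomial matrix `V`
with rows `v 0, …, v (n-1)`, and Cramer's rule writes the `j`-th entry of `δⁿ(u) P⁻¹` as
`q^j det Vⱼ / (q^n det V)`, where `Vⱼ` is `V` with row `j` replaced by `v n`. Numerator and
denominator both have degree at most `n deg u + (n + 0 + 1 + ⋯ + (n-1)) d = n deg u + n(n+1)d/2`.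
-/

open Polynomial Matrix

section Leibniz

variable {F : Type*} [CommRing F] {der : F → F}

theorem mul_der_pow (h_mul : ∀ a b : F, der (a * b) = a * der b + der a * b) (a : F) (k : ℕ) :
    a * der (a ^ k) = k * der a * a ^ k := by
  induction k with
  | zero =>
    have h_one : der 1 = 0 := by simpa using h_mul 1 1
    simp [h_one]
  | succ k ih =>
    rw [pow_succ, h_mul]
    push_cast
    linear_combination a * ih

theorem pow_succ_mul_der_eq (h_mul : ∀ a b : F, der (a * b) = a * der b + der a * b)
    {f a v : F} {k : ℕ} (h : f ^ k * a = v) :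
    f ^ (k + 1) * der a = f * der v - k * der f * v := by
  rw [← h, h_mul]
  linear_combination (-a) * mul_der_pow h_mul f k

end Leibniz

theorem Polynomial.natDegree_det_le_sum {R ι : Type*} [CommRing R] [Fintype ι] [DecidableEq ι]
    (A : Matrix ι ι R[X]) (r : ι → ℕ) (h : ∀ i j, (A i j).natDegree ≤ r i) :
    A.det.natDegree ≤ ∑ i, r i := by
  rw [det_apply]
  refine natDegree_sum_le_of_forall_le _ _ fun σ _ => ?_
  rw [Units.smul_def, zsmul_eq_mul]
  refine natDegree_mul_le.trans ?_
  rw [natDegree_intCast, zero_add]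
  calc (∏ i, A (σ i) i).natDegree ≤ ∑ i, (A (σ i) i).natDegree := natDegree_prod_le _ _
    _ ≤ ∑ i, r (σ i) := Finset.sum_le_sum fun i _ => h (σ i) i
    _ = ∑ i, r i := Equiv.sum_comp σ r

theorem Finset.add_sum_update {ι M : Type*} [Fintype ι] [DecidableEq ι] [AddCommMonoid M]
    (f : ι → M) (j : ι) (b : M) : f j + ∑ i, Function.update f j b i = b + ∑ i, f i := by
  rw [Finset.sum_update_of_mem (Finset.mem_univ j), Finset.sdiff_singleton_eq_erase,
    ← Finset.add_sum_erase _ f (Finset.mem_univ j), add_left_comm]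

theorem Matrix.updateRow_of_comp {α ι κ : Type*} [DecidableEq ι] (g : ℕ → κ → α) (e : ι → ℕ)
    (j : ι) (m : ℕ) :
    (of fun i k => g (e i) k).updateRow j (g m) = of fun i k => g (Function.update e j m i) k := by
  ext i k
  by_cases hi : i = j
  · subst hi; simp
  · simp [hi]

section ScaledIterate

variable {R ι : Type*} [CommRing R] [Fintype ι]

noncomputable def scaledIterate (q : R[X]) (N : Matrix ι ι R[X]) (u : ι → R[X]) :
    ℕ → ι → R[X]
  | 0 => u
  | k + 1 => fun j => (scaledIterate q N u k ᵥ* N) j + q * derivative (scaledIterate q N u k j)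
      - k • (derivative q * scaledIterate q N u k j)

theorem natDegree_scaledIterate_le {q : R[X]} {N : Matrix ι ι R[X]} {u : ι → R[X]} {d D : ℕ}
    (hq : q.natDegree ≤ d) (hN : ∀ i j, (N i j).natDegree ≤ d) (hu : ∀ j, (u j).natDegree ≤ D)
    (k : ℕ) (j : ι) : (scaledIterate q N u k j).natDegree ≤ D + k * d := by
  induction k generalizing j with
  | zero => simpa [scaledIterate] using hu j
  | succ k ih =>
    have hder : ∀ p : R[X], p.natDegree ≤ D + k * d → (derivative p).natDegree ≤ D + k * d :=
      fun p hp => (natDegree_derivative_le p).trans (Nat.sub_le_of_le_add (by omega))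
    have hvN : ((scaledIterate q N u k ᵥ* N) j).natDegree ≤ D + k * d + d :=
      natDegree_sum_le_of_forall_le _ _ fun i _ => natDegree_mul_le_of_le (ih i) (hN i j)
    have hqv : (q * derivative (scaledIterate q N u k j)).natDegree ≤ D + k * d + d :=
      (natDegree_mul_le_of_le hq (hder _ (ih j))).trans_eq (add_comm _ _)
    have hq'v : (k • (derivative q * scaledIterate q N u k j)).natDegree ≤ D + k * d + d :=
      (natDegree_smul_le _ _).trans <|
        (natDegree_mul_le_of_le ((natDegree_derivative_le q).trans (by omega)) (ih j)).trans_eq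
          (add_comm _ _)
    calc _ ≤ max (D + k * d + d) (D + k * d + d) :=
          natDegree_sub_le_of_le (natDegree_add_le_of_degree_le hvN hqv) hq'v
      _ = D + (k + 1) * d := by rw [max_self]; ring

theorem natDegree_pow_mul_det_scaledIterate_le [DecidableEq ι] {q : R[X]} {N : Matrix ι ι R[X]}
    {u : ι → R[X]} {d D : ℕ}
    (hq : q.natDegree ≤ d) (hN : ∀ i j, (N i j).natDegree ≤ d) (hu : ∀ j, (u j).natDegree ≤ D)
    (m : ℕ) (e : ι → ℕ) :
    (q ^ m * det (of fun i j => scaledIterate q N u (e i) j)).natDegree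
      ≤ Fintype.card ι * D + (m + ∑ i, e i) * d := by
  refine (natDegree_mul_le_of_le (natDegree_pow_le_of_le m hq)
    (natDegree_det_le_sum _ (fun i => D + e i * d) fun i j =>
      natDegree_scaledIterate_le hq hN hu (e i) j)).trans_eq ?_
  simp only [Finset.sum_add_distrib, Finset.sum_const, Finset.card_univ, smul_eq_mul,
    ← Finset.sum_mul]
  ring

end ScaledIterate

section RatFunc

variable {K : Type*} [Field K] {der : RatFunc K → RatFunc K}

theorem der_algebraMap (h_add : ∀ a b : RatFunc K, der (a + b) = der a + der b)
    (h_mul : ∀ a b : RatFunc K, der (a * b) = a * der b + der a * b)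
    (h_X : der RatFunc.X = 1) (h_C : ∀ c : K, der (RatFunc.C c) = 0) (p : K[X]) :
    der (algebraMap K[X] (RatFunc K) p) = algebraMap K[X] (RatFunc K) (derivative p) := by
  induction p using Polynomial.induction_on with
  | C c => rw [RatFunc.algebraMap_C, h_C, derivative_C, map_zero]
  | add p q hp hq => rw [map_add, h_add, hp, hq, derivative_add, map_add]
  | monomial m c ih =>
    rw [pow_succ, ← mul_assoc, map_mul, h_mul, ih, RatFunc.algebraMap_X, h_X, mul_one,
      ← RatFunc.algebraMap_X, ← map_mul, ← map_add, derivative_mul (f := C c * X ^ m),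
      derivative_X, mul_one, add_comm]

theorem ratFuncDeg_le_of_mul_eq {f : RatFunc K} {a b : K[X]} (hb : b ≠ 0)
    (h : f * algebraMap K[X] (RatFunc K) b = algebraMap K[X] (RatFunc K) a) :
    ratFuncDeg f ≤ max a.natDegree b.natDegree := by
  have hf : f = algebraMap K[X] (RatFunc K) a / algebraMap K[X] (RatFunc K) b := by
    rw [eq_div_iff (RatFunc.algebraMap_ne_zero hb), h]
  rcases eq_or_ne a 0 with rfl | ha
  · simp [hf, ratFuncDeg]
  · exact max_le_max (natDegree_le_of_dvd (hf ▸ RatFunc.num_div_dvd a hb) ha)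
      (natDegree_le_of_dvd (hf ▸ RatFunc.denom_div_dvd a b) hb)

variable {n : ℕ} {M : Matrix (Fin n) (Fin n) (RatFunc K)} {q : K[X]}
  {N : Matrix (Fin n) (Fin n) K[X]}

theorem algebraMap_scaledIterate (h_mul : ∀ a b : RatFunc K, der (a * b) = a * der b + der a * b)
    (hder : ∀ p, der (algebraMap K[X] (RatFunc K) p) = algebraMap K[X] (RatFunc K) (derivative p))
    (hN : ∀ i j, algebraMap K[X] (RatFunc K) q * M i j = algebraMap K[X] (RatFunc K) (N i j))
    (u : Fin n → K[X]) (k : ℕ) (j : Fin n) :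
    algebraMap K[X] (RatFunc K) q ^ k *
        (cvDelta der M)^[k] (fun l => algebraMap K[X] (RatFunc K) (u l)) j
      = algebraMap K[X] (RatFunc K) (scaledIterate q N u k j) := by
  induction k generalizing j with
  | zero => simp [scaledIterate]
  | succ k ih =>
    set a := (cvDelta der M)^[k] (fun l => algebraMap K[X] (RatFunc K) (u l))
    have hdera := pow_succ_mul_der_eq h_mul (ih j)
    rw [hder, hder] at hdera
    have hvN : algebraMap K[X] (RatFunc K) q ^ (k + 1) * (a ᵥ* M) j
        = algebraMap K[X] (RatFunc K) ((scaledIterate q N u k ᵥ* N) j) := by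
      simp only [vecMul, dotProduct, Finset.mul_sum, map_sum, map_mul, ← hN, ← ih]
      exact Finset.sum_congr rfl fun i _ => by ring
    rw [Function.iterate_succ_apply', cvDelta, Pi.add_apply, mul_add, hvN, hdera]
    simp only [scaledIterate, map_sub, map_add, map_mul, nsmul_eq_mul, map_natCast]
    ring

theorem algebraMap_det_scaledIterate
    (h_mul : ∀ a b : RatFunc K, der (a * b) = a * der b + der a * b)
    (hder : ∀ p, der (algebraMap K[X] (RatFunc K) p) = algebraMap K[X] (RatFunc K) (derivative p))
    (hN : ∀ i j, algebraMap K[X] (RatFunc K) q * M i j = algebraMap K[X] (RatFunc K) (N i j))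
    (u : Fin n → K[X]) (e : Fin n → ℕ) :
    algebraMap K[X] (RatFunc K) (det (of fun i j => scaledIterate q N u (e i) j))
      = algebraMap K[X] (RatFunc K) q ^ (∑ i, e i) *
        det (of fun i j =>
          (cvDelta der M)^[e i] (fun l => algebraMap K[X] (RatFunc K) (u l)) j) := by
  rw [RingHom.map_det, ← Finset.prod_pow_eq_pow_sum, ← det_mul_column]
  congr 1
  ext i j
  exact (algebraMap_scaledIterate h_mul hder hN u (e i) j).symm

theorem vecMul_inv_cvDeltaMat_apply_mul_eq
    (h_mul : ∀ a b : RatFunc K, der (a * b) = a * der b + der a * b)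
    (hder : ∀ p, der (algebraMap K[X] (RatFunc K) p) = algebraMap K[X] (RatFunc K) (derivative p))
    (hN : ∀ i j, algebraMap K[X] (RatFunc K) q * M i j = algebraMap K[X] (RatFunc K) (N i j))
    (u : Fin n → K[X])
    (hP : IsUnit (cvDeltaMat der M (fun l => algebraMap K[X] (RatFunc K) (u l))).det) (j : Fin n) :
    ((cvDelta der M)^[n] (fun l => algebraMap K[X] (RatFunc K) (u l)) ᵥ*
        (cvDeltaMat der M (fun l => algebraMap K[X] (RatFunc K) (u l)))⁻¹) j *
        algebraMap K[X] (RatFunc K) (q ^ n * det (of fun (i : Fin n) k => scaledIterate q N u i k))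
      = algebraMap K[X] (RatFunc K) (q ^ (j : ℕ) * det (of fun i k =>
          scaledIterate q N u (Function.update (fun i : Fin n => (i : ℕ)) j n i) k)) := by
  set A := algebraMap K[X] (RatFunc K)
  set U := fun l => A (u l)
  set P := cvDeltaMat der M U
  set w := (cvDelta der M)^[n] U
  set e := Function.update (fun i : Fin n => (i : ℕ)) j n
  have hV : A (det (of fun (i : Fin n) k => scaledIterate q N u i k))
      = A q ^ (∑ i : Fin n, (i : ℕ)) * P.det :=
    algebraMap_det_scaledIterate h_mul hder hN u _
  have hW : A (det (of fun i k => scaledIterate q N u (e i) k))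
      = A q ^ (∑ i, e i) * (P.updateRow j w).det := by
    rw [show P.updateRow j w = of fun i k => (cvDelta der M)^[e i] U k from
      updateRow_of_comp (fun m => (cvDelta der M)^[m] U) (fun i : Fin n => (i : ℕ)) j n]
    exact algebraMap_det_scaledIterate h_mul hder hN u e
  have hcramer : P.det * (w ᵥ* P⁻¹) j = (P.updateRow j w).det := by
    rw [← cramer_transpose_apply, ← det_smul_inv_vecMul_eq_cramer_transpose _ _ hP]
    rfl
  rw [map_mul, map_mul, map_pow, map_pow, hV, hW, ← hcramer, ← mul_assoc (A q ^ (j : ℕ)),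
    ← pow_add, Finset.add_sum_update, pow_add]
  ring

end RatFunc

theorem Fin.add_sum_val (n : ℕ) : n + ∑ i : Fin n, (i : ℕ) = n * (n + 1) / 2 := by
  rw [Fin.sum_univ_eq_sum_range (fun i => i), add_comm, ← Finset.sum_range_succ,
    Finset.sum_range_id, mul_comm, Nat.add_sub_cancel]

theorem cyclic_vector_companion_row_degree_bound_general {K : Type*} [Field K]
    {n : ℕ}
    (der : RatFunc K → RatFunc K)
    (h_add : ∀ a b : RatFunc K, der (a + b) = der a + der b)
    (h_mul : ∀ a b : RatFunc K, der (a * b) = a * der b + der a * b)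
    (h_X : der RatFunc.X = 1)
    (h_C : ∀ c : K, der (RatFunc.C c) = 0)
    (q : Polynomial K) (hq : q ≠ 0) (d : ℕ) (hqd : q.degree ≤ (d : WithBot ℕ))
    (M : Matrix (Fin n) (Fin n) (RatFunc K))
    (hM : ∀ i j : Fin n, ∃ p : Polynomial K, p.degree ≤ (d : WithBot ℕ) ∧
      algebraMap (Polynomial K) (RatFunc K) q * M i j
        = algebraMap (Polynomial K) (RatFunc K) p)
    (u : Fin n → Polynomial K)
    (hP : IsUnit (cvDeltaMat der M (fun l => algebraMap (Polynomial K) (RatFunc K) (u l))).det) :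
    ∀ j : Fin n,
      ratFuncDeg (Matrix.vecMul
          ((cvDelta der M)^[n] (fun l => algebraMap (Polynomial K) (RatFunc K) (u l)))
          (cvDeltaMat der M (fun l => algebraMap (Polynomial K) (RatFunc K) (u l)))⁻¹ j)
        ≤ n * (Finset.univ.sup fun l => (u l).natDegree) + n * (n + 1) / 2 * d := by
  intro j
  have hder := der_algebraMap h_add h_mul h_X h_C
  choose N hNdeg hN using hM
  have hqd' : q.natDegree ≤ d := natDegree_le_iff_degree_le.mpr hqd
  have hNdeg' i k : (N i k).natDegree ≤ d := natDegree_le_iff_degree_le.mpr (hNdeg i k)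
  have hu l : (u l).natDegree ≤ Finset.univ.sup fun l => (u l).natDegree :=
    Finset.le_sup (f := fun l => (u l).natDegree) (Finset.mem_univ l)
  have hden : algebraMap K[X] (RatFunc K)
      (q ^ n * det (of fun (i : Fin n) k => scaledIterate q N u i k)) ≠ 0 := by
    rw [map_mul, map_pow, algebraMap_det_scaledIterate h_mul hder hN u _]
    have hq' := RatFunc.algebraMap_ne_zero hq
    exact mul_ne_zero (pow_ne_zero _ hq') (mul_ne_zero (pow_ne_zero _ hq') hP.ne_zero)
  refine (ratFuncDeg_le_of_mul_eq (ne_zero_of_map hden)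
    (vecMul_inv_cvDeltaMat_apply_mul_eq h_mul hder hN u hP j)).trans (max_le ?_ ?_)
  · refine (natDegree_pow_mul_det_scaledIterate_le hqd' hNdeg' hu _ _).trans_eq ?_
    rw [Finset.add_sum_update, Fin.add_sum_val, Fintype.card_fin]
  · refine (natDegree_pow_mul_det_scaledIterate_le hqd' hNdeg' hu _ _).trans_eq ?_
    rw [Fin.add_sum_val, Fintype.card_fin]

/-- Degree bound for the last row `δⁿ(u)·P⁻¹` of the companion matrix produced
by the cyclic-vector method: each entry has degree at most
`n·deg u + n(n+1)d/2`. -/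
theorem cyclic_vector_companion_row_degree_bound {K : Type*} [Field K] [CharZero K]
    {n : ℕ}
    (der : RatFunc K → RatFunc K)
    (h_add : ∀ a b : RatFunc K, der (a + b) = der a + der b)
    (h_mul : ∀ a b : RatFunc K, der (a * b) = a * der b + der a * b)
    (h_X : der RatFunc.X = 1)
    (h_C : ∀ c : K, der (RatFunc.C c) = 0)
    (q : Polynomial K) (hq : q ≠ 0) (d : ℕ) (hqd : q.degree ≤ (d : WithBot ℕ))
    (M : Matrix (Fin n) (Fin n) (RatFunc K))
    (hM : ∀ i j : Fin n, ∃ p : Polynomial K, p.degree ≤ (d : WithBot ℕ) ∧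
      algebraMap (Polynomial K) (RatFunc K) q * M i j
        = algebraMap (Polynomial K) (RatFunc K) p)
    (u : Fin n → Polynomial K)
    (hP : IsUnit (cvDeltaMat der M (fun l => algebraMap (Polynomial K) (RatFunc K) (u l))).det) :
    ∀ j : Fin n,
      ratFuncDeg (Matrix.vecMul
          ((cvDelta der M)^[n] (fun l => algebraMap (Polynomial K) (RatFunc K) (u l)))
          (cvDeltaMat der M (fun l => algebraMap (Polynomial K) (RatFunc K) (u l)))⁻¹ j)
        ≤ n * (Finset.univ.sup fun l => (u l).natDegree) + n * (n + 1) / 2 * d :=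
  cyclic_vector_companion_row_degree_bound_general der h_add h_mul h_X h_C q hq d hqd M hM u hP
end

section
/- Let K be a field of characteristic zero, let A ∈ M_n(K[X]) have polynomial entries of degree at most d, let 1 ≤ i ≤ n−1, suppose the first i−1 rows of A are in companion shape (row j of A equals the standard basis row e_{j+1} for 1 ≤ j ≤ i−1), and suppose A_{i,i+1} ≠ 0. Let T ∈ M_n(K(X)) be the identity matrix with its (i+1)-th row replaced by the i-th row of A (so T is invertible because A_{i,i+1} ≠ 0). Then A_{i,i+1}·T[A], where T[A] = (TA + T′)T⁻¹, is a matrix with polynomial entries of degree at most 3d; in particular every entry of T[A] has degree, as a rational function, at most 3d. -/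
/-- Auxiliary: a sum against a column of the identity with one row replaced. -/
lemma sum_mul_updateRow_one {R : Type*} [CommRing R] {n : ℕ} (w v : Fin n → R) (j l : Fin n) :
    ∑ k, w k * ((1 : Matrix (Fin n) (Fin n) R).updateRow j v) k l
      = (if l = j then 0 else w l) + w j * v l := by
  classical
  rw [Finset.sum_eq_sum_sdiff_singleton_add (Finset.mem_univ j)]
  congr 1
  · have h : ∀ k ∈ Finset.univ \ {j},
        w k * ((1 : Matrix (Fin n) (Fin n) R).updateRow j v) k l
          = if k = l then w k else 0 := by
      intro k hk
      rw [Finset.mem_sdiff, Finset.mem_singleton] at hk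
      rw [Matrix.updateRow_apply, if_neg hk.2, Matrix.one_apply]
      split <;> simp
    rw [Finset.sum_congr rfl h, Finset.sum_ite_eq' (Finset.univ \ {j}) l w]
    by_cases hl : l = j <;> simp [hl]
  · rw [Matrix.updateRow_self]

/-- One pivot step of `DBZ¹`: if `A` has polynomial entries of degree `≤ d`,
its first `i−1` rows in companion shape and pivot `A_{i,i+1} ≠ 0`, and `T` is
the identity matrix with its `(i+1)`-th row replaced by the `i`-th row of `A`,
then `A_{i,i+1}·T[A]` has polynomial entries of degree `≤ 3d`; in particular
every entry of `T[A] = (T A + T′) T⁻¹` has degree at most `3d`.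
(Rows and columns are indexed from `0` here, so the pivot row index `i`
ranges over `0 ≤ i ≤ n−2`.) -/
theorem dbz_pivot_step_degree {K : Type*} [Field K] [CharZero K] {n : ℕ} (d : ℕ)
    (A : Matrix (Fin n) (Fin n) (Polynomial K))
    (hA : ∀ r l : Fin n, (A r l).degree ≤ (d : WithBot ℕ))
    (i : Fin n) (hi : (i : ℕ) + 1 < n)
    (hcomp : ∀ j : Fin n, (j : ℕ) < (i : ℕ) →
      ∀ l : Fin n, A j l = if (l : ℕ) = (j : ℕ) + 1 then 1 else 0)
    (hpiv : A i ⟨(i : ℕ) + 1, hi⟩ ≠ 0)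
    (T T' G : Matrix (Fin n) (Fin n) (RatFunc K))
    (hT : T = (1 : Matrix (Fin n) (Fin n) (RatFunc K)).updateRow ⟨(i : ℕ) + 1, hi⟩
        (fun l => algebraMap (Polynomial K) (RatFunc K) (A i l)))
    (hT' : T' = (0 : Matrix (Fin n) (Fin n) (RatFunc K)).updateRow ⟨(i : ℕ) + 1, hi⟩
        (fun l => algebraMap (Polynomial K) (RatFunc K) (Polynomial.derivative (A i l))))
    (hG : G = (T * A.map (fun p => algebraMap (Polynomial K) (RatFunc K) p) + T') * T⁻¹) :
    (∀ r l : Fin n, ∃ p : Polynomial K, p.degree ≤ ((3 * d : ℕ) : WithBot ℕ) ∧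
      algebraMap (Polynomial K) (RatFunc K) (A i ⟨(i : ℕ) + 1, hi⟩) * G r l
        = algebraMap (Polynomial K) (RatFunc K) p) ∧
    (∀ r l : Fin n, ratFuncDeg (G r l) ≤ 3 * d) := by
  classical
  set φ := algebraMap (Polynomial K) (RatFunc K) with hφ
  set j : Fin n := ⟨(i : ℕ) + 1, hi⟩ with hjdef
  set π : Polynomial K := A i j with hπdef
  have hπ0 : π ≠ 0 := hpiv
  have hφπ : φ π ≠ 0 := RatFunc.algebraMap_ne_zero hπ0
  -- the explicit inverse of T
  set S : Matrix (Fin n) (Fin n) (RatFunc K) :=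
    (1 : Matrix (Fin n) (Fin n) (RatFunc K)).updateRow j
      (fun l => (if l = j then 1 else -(φ (A i l))) / φ π) with hSdef
  have hTS : T * S = 1 := by
    ext r l
    rw [Matrix.mul_apply]
    by_cases hr : r = j
    · subst hr
      have h1 : ∀ k : Fin n, T j k = φ (A i k) := by
        intro k
        rw [hT, Matrix.updateRow_self]
      rw [Finset.sum_congr rfl fun k _ => by rw [h1 k], hSdef,
        sum_mul_updateRow_one (fun k => φ (A i k)) _ j l]
      rw [mul_div_assoc'] at *
      rw [mul_div_cancel_left₀ _ hφπ]
      by_cases hl : l = j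
      · subst hl; simp [Matrix.one_apply]
      · simp [hl, Matrix.one_apply, Ne.symm hl]
    · have h1 : ∀ k : Fin n,
          T r k * S k l = (1 : Matrix (Fin n) (Fin n) (RatFunc K)) r k * S k l := by
        intro k
        rw [hT, Matrix.updateRow_apply, if_neg hr]
      rw [Finset.sum_congr rfl fun k _ => h1 k, ← Matrix.mul_apply, one_mul, hSdef,
        Matrix.updateRow_apply, if_neg hr]
  have hTinv : T⁻¹ = S := Matrix.inv_eq_right_inv hTS
  -- the numerator matrix is polynomial
  set P : Matrix (Fin n) (Fin n) (Polynomial K) := fun r l =>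
    if r = j then (∑ k, A i k * A k l) + Polynomial.derivative (A i l) else A r l with hPdef
  have hM : ∀ r l : Fin n, (T * A.map (fun p => φ p) + T') r l = φ (P r l) := by
    intro r l
    rw [Matrix.add_apply, Matrix.mul_apply]
    by_cases hr : r = j
    · subst hr
      have h1 : ∀ k : Fin n, T j k * (A.map (fun p => φ p)) k l = φ (A i k * A k l) := by
        intro k
        rw [hT, Matrix.updateRow_self, Matrix.map_apply, map_mul]
      rw [Finset.sum_congr rfl fun k _ => h1 k, ← map_sum, hT', Matrix.updateRow_self,
        ← map_add]
      congr 1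
      simp [hPdef]
    · have h1 : ∀ k : Fin n, T r k * (A.map (fun p => φ p)) k l
          = (1 : Matrix (Fin n) (Fin n) (RatFunc K)) r k * (A.map (fun p => φ p)) k l := by
        intro k
        rw [hT, Matrix.updateRow_apply, if_neg hr]
      rw [Finset.sum_congr rfl fun k _ => h1 k, ← Matrix.mul_apply, one_mul, hT',
        Matrix.updateRow_apply, if_neg hr]
      simp [hPdef, hr]
  -- degree bound on P
  have hdd : ((d : WithBot ℕ) + (d : WithBot ℕ)) = ((2 * d : ℕ) : WithBot ℕ) := by
    push_cast; ring
  have hd2d : (d : WithBot ℕ) ≤ ((2 * d : ℕ) : WithBot ℕ) := by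
    rw [Nat.cast_le]; omega
  have hP : ∀ r l : Fin n, (P r l).degree ≤ ((2 * d : ℕ) : WithBot ℕ) := by
    intro r l
    simp only [hPdef]
    by_cases hr : r = j
    · rw [if_pos hr]
      refine le_trans (Polynomial.degree_add_le _ _) (max_le ?_ ?_)
      · refine le_trans (Polynomial.degree_sum_le _ _) ?_
        refine Finset.sup_le fun k _ => ?_
        refine le_trans (Polynomial.degree_mul_le _ _) ?_
        rw [← hdd]
        exact add_le_add (hA i k) (hA k l)
      · exact le_trans (le_trans Polynomial.degree_derivative_le (hA i l)) hd2d
    · rw [if_neg hr]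
      exact le_trans (hA r l) hd2d
  -- witness polynomials
    -- p r l
  have hd3 : ((d : WithBot ℕ) + ((2 * d : ℕ) : WithBot ℕ)) = ((3 * d : ℕ) : WithBot ℕ) := by
    push_cast; ring
  have hd3' : (((2 * d : ℕ) : WithBot ℕ) + (d : WithBot ℕ)) = ((3 * d : ℕ) : WithBot ℕ) := by
    push_cast; ring
  set p : Fin n → Fin n → Polynomial K := fun r l =>
    (if l = j then 0 else π * P r l) + P r j * (if l = j then 1 else -(A i l)) with hpdef
  have hpdeg : ∀ r l : Fin n, (p r l).degree ≤ ((3 * d : ℕ) : WithBot ℕ) := by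
    intro r l
    simp only [hpdef]
    refine le_trans (Polynomial.degree_add_le _ _) (max_le ?_ ?_)
    · by_cases hl : l = j
      · simp [hl]
      · rw [if_neg hl]
        refine le_trans (Polynomial.degree_mul_le _ _) ?_
        rw [← hd3]
        exact add_le_add (hA i j) (hP r l)
    · refine le_trans (Polynomial.degree_mul_le _ _) ?_
      rw [← hd3']
      refine add_le_add (hP r j) ?_
      by_cases hl : l = j
      · rw [if_pos hl]
        refine le_trans Polynomial.degree_one_le ?_
        exact_mod_cast Nat.zero_le d
      · rw [if_neg hl, Polynomial.degree_neg]
        exact hA i l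
  -- the key identity
  have hkey : ∀ r l : Fin n, φ π * G r l = φ (p r l) := by
    intro r l
    rw [hG, hTinv, Matrix.mul_apply]
    have h1 : ∀ k : Fin n, (T * A.map (fun q => φ q) + T') r k * S k l
        = φ (P r k) * S k l := fun k => by rw [hM]
    rw [Finset.sum_congr rfl fun k _ => h1 k, hSdef,
      sum_mul_updateRow_one (fun k => φ (P r k)) _ j l]
    rw [mul_add]
    simp only [hpdef, map_add]
    congr 1
    · by_cases hl : l = j
      · simp [hl]
      · rw [if_neg hl, if_neg hl, map_mul, hπdef]
    · rw [mul_comm (φ π), mul_assoc, div_mul_cancel₀ _ hφπ, map_mul]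
      congr 1
      by_cases hl : l = j
      · simp [hl]
      · rw [if_neg hl, if_neg hl, map_neg]
  refine ⟨fun r l => ⟨p r l, hpdeg r l, hkey r l⟩, fun r l => ?_⟩
  -- second part: degrees of entries of G
  have hGrl : G r l = φ (p r l) / φ π := by
    rw [eq_div_iff hφπ, mul_comm]
    exact hkey r l
  by_cases hp0 : p r l = 0
  · rw [hGrl, hp0, map_zero, zero_div]
    simp [ratFuncDeg]
  · have hnum : (G r l).num.natDegree ≤ 3 * d := by
      have hdvd : (G r l).num ∣ p r l := by
        rw [hGrl]; exact RatFunc.num_div_dvd (p r l) hπ0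
      refine le_trans (Polynomial.natDegree_le_of_dvd hdvd hp0) ?_
      exact Polynomial.natDegree_le_iff_degree_le.mpr (hpdeg r l)
    have hden : (G r l).denom.natDegree ≤ 3 * d := by
      have hdvd : (G r l).denom ∣ π := by
        rw [hGrl]; exact RatFunc.denom_div_dvd (p r l) π
      refine le_trans (Polynomial.natDegree_le_of_dvd hdvd hπ0) ?_
      have : π.natDegree ≤ d := Polynomial.natDegree_le_iff_degree_le.mpr (hA i j)
      omega
    exact max_le hnum hden
end

section
/- Let K be a field of characteristic zero, let q ∈ K[X] be nonzero with deg(q) ≤ d, and let M ∈ M_n(K(X)) be such that qM has polynomial entries of degree at most d. Let 1 ≤ k ≤ n and let P ∈ M_n(K(X)) be an invertible matrix whose first k rows are e_1, δ(e_1), ..., δ^{k−1}(e_1) and whose remaining n−k rows each belong to the set {e_2, ..., e_n} of standard basis rows. Then: (1) q^{k−1}·P has polynomial entries of degree at most (k−1)d; (2) q^{k(k−1)/2}·det(P) is a polynomial of degree at most k(k−1)d/2; (3) q^{k(k+1)/2}·det(P)·P[M], where P[M] = (PM + P′)P⁻¹, has polynomial entries of degree at most k(k+1)d/2. In particular, the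 degrees occurring in the matrices produced by the first phase of the Danilevski–Barkatou–Zürcher algorithm grow only quadratically in k. -/
open Polynomial

theorem Matrix.det_smul_inv_eq_adjugate {n R : Type*} [Fintype n] [DecidableEq n] [CommRing R]
    (A : Matrix n n R) (h : IsUnit A.det) : A.det • A⁻¹ = A.adjugate := by
  rw [A.nonsing_inv_apply h, smul_smul, h.mul_val_inv, one_smul]

def WeightLE {K : Type*} [Field K] (q : K[X]) (d e : ℕ) (f : RatFunc K) : Prop :=
  ∃ p : K[X], p.degree ≤ ((e * d : ℕ) : WithBot ℕ) ∧
    algebraMap K[X] (RatFunc K) q ^ e * f = algebraMap K[X] (RatFunc K) p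

namespace WeightLE

variable {K : Type*} [Field K] {q : K[X]} {d e e' : ℕ} {f g : RatFunc K}

theorem zero (e : ℕ) : WeightLE q d e 0 :=
  ⟨0, by simp, by simp⟩

theorem one : WeightLE q d 0 1 :=
  ⟨1, by simp, by simp⟩

theorem intCast (z : ℤ) : WeightLE q d 0 z :=
  ⟨z, by simpa using degree_intCast_le z, by simp⟩

theorem pi_single {ι : Type*} [DecidableEq ι] (j l : ι) :
    WeightLE q d 0 ((Pi.single j 1 : ι → RatFunc K) l) := by
  rw [Pi.single_apply]
  split_ifs
  exacts [one, zero 0]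

theorem add (hf : WeightLE q d e f) (hg : WeightLE q d e g) : WeightLE q d e (f + g) := by
  obtain ⟨p₁, hp₁, h₁⟩ := hf
  obtain ⟨p₂, hp₂, h₂⟩ := hg
  exact ⟨p₁ + p₂, (degree_add_le _ _).trans (max_le hp₁ hp₂),
    by rw [mul_add, h₁, h₂, map_add]⟩

theorem mul (hf : WeightLE q d e f) (hg : WeightLE q d e' g) :
    WeightLE q d (e + e') (f * g) := by
  obtain ⟨p₁, hp₁, h₁⟩ := hf
  obtain ⟨p₂, hp₂, h₂⟩ := hg
  refine ⟨p₁ * p₂, (degree_mul_le _ _).trans ?_, ?_⟩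
  · rw [add_mul, Nat.cast_add]
    exact add_le_add hp₁ hp₂
  · rw [map_mul, ← h₁, ← h₂, pow_add]
    ring

theorem mono (hqd : q.degree ≤ d) (hee : e ≤ e') (hf : WeightLE q d e f) :
    WeightLE q d e' f := by
  have hq : WeightLE q d (e' - e) 1 :=
    ⟨q ^ (e' - e), degree_pow_le_of_le _ hqd |>.trans (by push_cast; rfl), by simp⟩
  simpa [Nat.add_sub_cancel' hee] using hf.mul hq

theorem sum {ι : Type*} {s : Finset ι} {f : ι → RatFunc K}
    (h : ∀ i ∈ s, WeightLE q d e (f i)) : WeightLE q d e (∑ i ∈ s, f i) :=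
  Finset.sum_induction f _ (fun _ _ => add) (zero e) h

theorem prod {ι : Type*} {s : Finset ι} {w : ι → ℕ} {f : ι → RatFunc K}
    (h : ∀ i ∈ s, WeightLE q d (w i) (f i)) :
    WeightLE q d (∑ i ∈ s, w i) (∏ i ∈ s, f i) := by
  classical
  induction s using Finset.induction_on with
  | empty => simpa using one
  | insert i s hi ih =>
    rw [Finset.sum_insert hi, Finset.prod_insert hi]
    exact (h i (s.mem_insert_self i)).mul (ih fun j hj => h j (Finset.mem_insert_of_mem hj))

theorem det {n : Type*} [Fintype n] [DecidableEq n] {w : n → ℕ} {A : Matrix n n (RatFunc K)}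
    (h : ∀ i j, WeightLE q d (w i) (A i j)) : WeightLE q d (∑ i, w i) A.det := by
  rw [Matrix.det_apply']
  refine sum fun σ _ => ?_
  have hσ := prod (s := Finset.univ) (w := w ∘ σ) fun i _ => h (σ i) i
  rw [Function.comp_def, Equiv.sum_comp σ w] at hσ
  simpa using (intCast _).mul hσ

theorem adjugate {n : Type*} [Fintype n] [DecidableEq n] (hqd : q.degree ≤ d) {w : n → ℕ}
    {A : Matrix n n (RatFunc K)} (h : ∀ i j, WeightLE q d (w i) (A i j)) (l j : n) :
    WeightLE q d (∑ i, w i) (A.adjugate l j) := by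
  rw [Matrix.adjugate_apply]
  have hrow : ∀ i i', WeightLE q d (Function.update w j 0 i)
      (A.updateRow j (Pi.single l 1) i i') := by
    intro i i'
    rcases eq_or_ne i j with rfl | hij
    · simpa using pi_single l i'
    · simpa [hij] using h i i'
  refine (det hrow).mono hqd (Finset.sum_le_sum fun i _ => ?_)
  rcases eq_or_ne i j with rfl | hij
  · simp
  · simp [hij]

theorem det_mul_mul_inv {n : Type*} [Fintype n] [DecidableEq n] (hqd : q.degree ≤ d)
    {a b : ℕ} {w : n → ℕ} {A B : Matrix n n (RatFunc K)} (hA : IsUnit A.det)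
    (hw : ∑ i, w i ≤ b) (hAw : ∀ i j, WeightLE q d (w i) (A i j))
    (hB : ∀ i j, WeightLE q d a (B i j)) (i j : n) :
    WeightLE q d (a + b) (A.det * (B * A⁻¹) i j) := by
  have hBadj : WeightLE q d (a + b) ((B * A.adjugate) i j) :=
    sum fun l _ => (hB i l).mul ((adjugate hqd hAw l j).mono hqd hw)
  rwa [← A.det_smul_inv_eq_adjugate hA, Matrix.mul_smul, Matrix.smul_apply, smul_eq_mul]
    at hBadj

end WeightLE

theorem Polynomial.mul_derivative_pow_s12 {R : Type*} [CommSemiring R] (q : R[X]) (e : ℕ) :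
    q * derivative (q ^ e) = C (e : R) * derivative q * q ^ e := by
  cases e with
  | zero => simp
  | succ e =>
    rw [derivative_pow_succ, Nat.cast_succ, pow_succ]
    ring

theorem cvDelta_row {F : Type*} [Field F] {n : ℕ} (der : F → F)
    (M P : Matrix (Fin n) (Fin n) F) (i : Fin n) : (P * M + P.map der) i = cvDelta der M (P i) := by
  ext j
  simp [cvDelta, Matrix.mul_apply, Matrix.vecMul, dotProduct]

section Derivation

variable {K : Type*} [Field K] {der : RatFunc K → RatFunc K}
  (h_add : ∀ a b, der (a + b) = der a + der b)
  (h_mul : ∀ a b, der (a * b) = a * der b + der a * b)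
  (h_X : der RatFunc.X = 1) (h_C : ∀ c : K, der (RatFunc.C c) = 0)
include h_add h_mul h_X h_C

theorem der_algebraMap_s12 (p : K[X]) :
    der (algebraMap K[X] (RatFunc K) p) = algebraMap K[X] (RatFunc K) (derivative p) := by
  induction p using Polynomial.induction_on' with
  | add p r hp hr => rw [map_add, h_add, hp, hr, derivative_add, map_add]
  | monomial m a =>
    induction m with
    | zero => rw [monomial_zero_left, RatFunc.algebraMap_C, h_C, derivative_C, map_zero]
    | succ m ih =>
      rw [← monomial_mul_X, map_mul, h_mul, ih, RatFunc.algebraMap_X, h_X, derivative_mul,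
        derivative_X]
      simp only [map_add, map_mul, RatFunc.algebraMap_X, mul_one]
      ring

variable {q : K[X]} {d e : ℕ}

/-- If `q ^ e * f = p`, then `q ^ (e + 1) * f' = q * p' - e * q' * p`. -/
theorem WeightLE.der_succ (hqd : q.degree ≤ d) {f : RatFunc K} (hf : WeightLE q d e f) :
    WeightLE q d (e + 1) (der f) := by
  obtain ⟨p, hp, hqf⟩ := hf
  set A := algebraMap K[X] (RatFunc K)
  have hleib : A (q ^ e) * der f + A (derivative (q ^ e)) * f = A (derivative p) := by
    rw [← der_algebraMap_s12 h_add h_mul h_X h_C (q ^ e), ← h_mul, map_pow, hqf,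
      der_algebraMap_s12 h_add h_mul h_X h_C]
  refine ⟨q * derivative p - C (e : K) * derivative q * p, ?_, ?_⟩
  · have hdq : (derivative q).degree ≤ d := degree_derivative_le.trans hqd
    have hdp : (derivative p).degree ≤ ((e * d : ℕ) : WithBot ℕ) :=
      degree_derivative_le.trans hp
    have hsplit : (((e + 1) * d : ℕ) : WithBot ℕ) = d + ((e * d : ℕ) : WithBot ℕ) := by
      push_cast; ring
    rw [hsplit]
    refine (degree_sub_le _ _).trans (max_le ?_ ?_)
    · exact (degree_mul_le _ _).trans (add_le_add hqd hdp)
    · refine (degree_mul_le _ _).trans (add_le_add ?_ hp)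
      exact (degree_mul_le _ _).trans ((add_le_add degree_C_le hdq).trans (by simp))
  · have hpow := congrArg A (mul_derivative_pow_s12 q e)
    simp only [A, map_sub, map_mul, map_pow] at hpow hleib hqf ⊢
    linear_combination A q * hleib - f * hpow - A (C (e : K)) * A (derivative q) * hqf

variable {n : ℕ} {M : Matrix (Fin n) (Fin n) (RatFunc K)}

theorem WeightLE.cvDelta_apply (hqd : q.degree ≤ d) (hM : ∀ i j, WeightLE q d 1 (M i j))
    {u : Fin n → RatFunc K} (hu : ∀ j, WeightLE q d e (u j)) (j : Fin n) :
    WeightLE q d (e + 1) (cvDelta der M u j) := by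
  simp only [cvDelta, Pi.add_apply, Matrix.vecMul, dotProduct]
  exact add (sum fun l _ => (hu l).mul (hM l j)) ((hu j).der_succ h_add h_mul h_X h_C hqd)

theorem WeightLE.cvDelta_iterate (hqd : q.degree ≤ d) (hM : ∀ i j, WeightLE q d 1 (M i j))
    (j₀ : Fin n) (m : ℕ) (j : Fin n) :
    WeightLE q d m ((cvDelta der M)^[m] (Pi.single j₀ 1) j) := by
  induction m generalizing j with
  | zero => exact pi_single j₀ j
  | succ m ih =>
    rw [Function.iterate_succ_apply']
    exact cvDelta_apply h_add h_mul h_X h_C hqd hM ih j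

end Derivation

theorem sum_ite_val_lt_le (n k : ℕ) :
    ∑ i : Fin n, (if (i : ℕ) < k then (i : ℕ) else 0) ≤ k * (k - 1) / 2 := by
  rw [Fin.sum_univ_eq_sum_range (fun i => if i < k then i else 0), ← Finset.sum_filter,
    ← Finset.sum_range_id]
  exact Finset.sum_le_sum_of_subset fun i => by simp

theorem Nat.mul_add_one_div_two (k : ℕ) : k * (k + 1) / 2 = k + k * (k - 1) / 2 := by
  have h := Nat.triangle_succ k
  rw [Nat.add_sub_cancel] at h
  rw [mul_comm, h, add_comm]

/-- Degree bounds for the first phase of the DBZ algorithm: if the first `k`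
rows of the invertible matrix `P` are `e₁, δ(e₁), …, δ^{k−1}(e₁)` and the other
rows are standard basis rows among `e₂, …, eₙ`, then `q^{k−1} P` has polynomial
entries of degree `≤ (k−1)d`, `q^{k(k−1)/2} det P` is a polynomial of degree
`≤ k(k−1)d/2`, and `q^{k(k+1)/2} det(P)·P[M]` has polynomial entries of degree
`≤ k(k+1)d/2`, where `P[M] = (P M + P′) P⁻¹`. -/
theorem dbz_phase_one_degree_bounds {K : Type*} [Field K] {n k : ℕ}
    (hk1 : 1 ≤ k) (hkn : k ≤ n)
    (der : RatFunc K → RatFunc K)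
    (h_add : ∀ a b : RatFunc K, der (a + b) = der a + der b)
    (h_mul : ∀ a b : RatFunc K, der (a * b) = a * der b + der a * b)
    (h_X : der RatFunc.X = 1)
    (h_C : ∀ c : K, der (RatFunc.C c) = 0)
    (q : Polynomial K) (d : ℕ) (hqd : q.degree ≤ (d : WithBot ℕ))
    (M : Matrix (Fin n) (Fin n) (RatFunc K))
    (hM : ∀ i j : Fin n, ∃ p : Polynomial K, p.degree ≤ (d : WithBot ℕ) ∧
      algebraMap (Polynomial K) (RatFunc K) q * M i j
        = algebraMap (Polynomial K) (RatFunc K) p)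
    (P : Matrix (Fin n) (Fin n) (RatFunc K)) (hP : IsUnit P.det)
    (hProws₁ : ∀ i : Fin n, (i : ℕ) < k →
      P i = (cvDelta der M)^[(i : ℕ)] (Pi.single (⟨0, by omega⟩ : Fin n) 1))
    (hProws₂ : ∀ i : Fin n, k ≤ (i : ℕ) →
      ∃ j : Fin n, 1 ≤ (j : ℕ) ∧ P i = Pi.single j 1) :
    (∀ i j : Fin n, ∃ p : Polynomial K,
      p.degree ≤ (((k - 1) * d : ℕ) : WithBot ℕ) ∧
      (algebraMap (Polynomial K) (RatFunc K) q) ^ (k - 1) * P i j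
        = algebraMap (Polynomial K) (RatFunc K) p) ∧
    (∃ p : Polynomial K, p.degree ≤ ((k * (k - 1) / 2 * d : ℕ) : WithBot ℕ) ∧
      (algebraMap (Polynomial K) (RatFunc K) q) ^ (k * (k - 1) / 2) * P.det
        = algebraMap (Polynomial K) (RatFunc K) p) ∧
    (∀ i j : Fin n, ∃ p : Polynomial K,
      p.degree ≤ ((k * (k + 1) / 2 * d : ℕ) : WithBot ℕ) ∧
      (algebraMap (Polynomial K) (RatFunc K) q) ^ (k * (k + 1) / 2) * P.det *
        ((P * M + P.map der) * P⁻¹) i j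
        = algebraMap (Polynomial K) (RatFunc K) p) := by
  classical
  have hM1 : ∀ i j, WeightLE q d 1 (M i j) := fun i j => by simpa [WeightLE] using hM i j
  set w : Fin n → ℕ := fun i => if (i : ℕ) < k then i else 0
  have hw : ∀ i, w i ≤ k - 1 := fun i => by dsimp only [w]; split_ifs <;> omega
  have hPw : ∀ i j, WeightLE q d (w i) (P i j) := by
    intro i j
    by_cases hik : (i : ℕ) < k
    · simpa [w, hik, hProws₁ i hik] using
        WeightLE.cvDelta_iterate h_add h_mul h_X h_C hqd hM1 _ i j
    · obtain ⟨l, -, hl⟩ := hProws₂ i (not_lt.mp hik)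
      simpa [w, hik, hl] using WeightLE.pi_single l j
  have hdet : WeightLE q d (k * (k - 1) / 2) P.det :=
    (WeightLE.det hPw).mono hqd (sum_ite_val_lt_le n k)
  have hB : ∀ i j, WeightLE q d k ((P * M + P.map der) i j) := fun i j => by
    rw [cvDelta_row]
    exact (WeightLE.cvDelta_apply h_add h_mul h_X h_C hqd hM1 (hPw i) j).mono hqd
      (by have := hw i; omega)
  refine ⟨fun i j => (hPw i j).mono hqd (hw i), hdet, fun i j => ?_⟩
  rw [mul_assoc, Nat.mul_add_one_div_two]
  exact WeightLE.det_mul_mul_inv hqd hP (sum_ite_val_lt_le n k) hPw hB i j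
end

section
/- Let K be a field of characteristic zero, let n ≥ 1 and d ≥ 0, and let F be the field of rational functions over K in the indeterminates m̂_{i,j,k} (1 ≤ i,j ≤ n, 0 ≤ k ≤ d) and q̂_k (0 ≤ k ≤ d), i.e., F = Frac(K[m̂_{i,j,k}, q̂_k]). Consider the generic matrix M̂ ∈ M_n(F(X)) whose (i,j) entry is (Σ_{k=0}^{d} m̂_{i,j,k} X^k)/(Σ_{k=0}^{d} q̂_k X^k), where the derivation on F(X) sends every element of F to 0 and X to 1. Then e_1 is a cyclic vector for M̂: the n×n matrix Δ_n(e_1), whose rows are e_1, δ(e_1), ..., δ^{n−1}(e_1) with δ(u) = uM̂ + u′, is invertible over F(X). Consequently, on a generic input the Danilevski–Barkatou–Zürcher algorithm produces a single companion block, equal to the output of the cyclic-vector method with initial vector e_1. -/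
/-- The field `F = K(m̂_{i,j,k}, q̂_k)` of rational functions over `K` in the
indeterminates `m̂_{i,j,k}` (`1 ≤ i,j ≤ n`, `0 ≤ k ≤ d`) and `q̂_k` (`0 ≤ k ≤ d`). -/
abbrev GenEntryField (K : Type*) [Field K] (n d : ℕ) : Type _ :=
  FractionRing (MvPolynomial ((Fin n × Fin n × Fin (d + 1)) ⊕ Fin (d + 1)) K)

/-- The generic matrix `M̂ ∈ Mₙ(F(X))` with `(i,j)` entry
`(Σ_k m̂_{i,j,k} X^k) / (Σ_k q̂_k X^k)`. -/
noncomputable def genericMatrix (K : Type*) [Field K] (n d : ℕ) :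
    Matrix (Fin n) (Fin n) (RatFunc (GenEntryField K n d)) :=
  Matrix.of fun i j =>
    (∑ k : Fin (d + 1),
      RatFunc.C (algebraMap (MvPolynomial ((Fin n × Fin n × Fin (d + 1)) ⊕ Fin (d + 1)) K)
          (GenEntryField K n d) (MvPolynomial.X (Sum.inl (i, j, k))))
        * RatFunc.X ^ (k : ℕ)) /
    (∑ k : Fin (d + 1),
      RatFunc.C (algebraMap (MvPolynomial ((Fin n × Fin n × Fin (d + 1)) ⊕ Fin (d + 1)) K)
          (GenEntryField K n d) (MvPolynomial.X (Sum.inr k)))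
        * RatFunc.X ^ (k : ℕ))

/-!
Write `M̂ = P / Q` with `P` a matrix of polynomials and `Q` a polynomial. By induction,
`δ^k(u) = v_k / Q^k` where `v_0 = u` and `v_{k+1} = v_k P + Q v_k′ − k Q′ v_k` has polynomial
entries, so `Δₙ(e₁)` is invertible as soon as the matrix `V` with rows `v_0, …, v_{n−1}` has
nonzero determinant. The recursion for `v_k` commutes with specializing the coefficients
`m̂_{i,j,k}, q̂_k`. At `m̂_{i,j,0} = [j = i + 1]`, `q̂_0 = 1` and all other variables `0`, `P` becomes
the upper shift matrix and `Q = 1`, so `v_k = e_{k+1}` and `det V` specializes to `1`.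
-/

open Polynomial

noncomputable def RatFunc.derivationOfLeibniz {F : Type*} [Field F] (der : RatFunc F → RatFunc F)
    (h_add : ∀ a b, der (a + b) = der a + der b)
    (h_mul : ∀ a b, der (a * b) = a * der b + der a * b)
    (h_C : ∀ c : F, der (RatFunc.C c) = 0) :
    Derivation F (RatFunc F) (RatFunc F) :=
  Derivation.mk'
    { toFun := der
      map_add' := h_add
      map_smul' := fun c a => by
        rw [Algebra.smul_def, RatFunc.algebraMap_eq_C, h_mul, h_C, zero_mul, add_zero,
          RingHom.id_apply, Algebra.smul_def, RatFunc.algebraMap_eq_C] }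
    fun a b => by simp [h_mul, smul_eq_mul, mul_comm]

theorem Derivation.apply_algebraMap_polynomial {F : Type*} [Field F]
    (D : Derivation F (RatFunc F) (RatFunc F)) (hX : D RatFunc.X = 1) (p : F[X]) :
    D (algebraMap F[X] (RatFunc F) p) = algebraMap F[X] (RatFunc F) (derivative p) := by
  have hD : D.compAlgebraMap F[X] = (Algebra.linearMap F[X] (RatFunc F)).compDer derivative' :=
    derivation_ext (by simp [hX])
  exact congr($hD p)

theorem Derivation.leibniz_div_pow {R K : Type*} [CommRing R] [Field K] [Algebra R K]
    (D : Derivation R K K) (a : K) {b : K} (hb : b ≠ 0) (k : ℕ) :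
    D (a / b ^ k) = (D a * b - k * a * D b) / b ^ (k + 1) := by
  rw [Derivation.leibniz_div, Derivation.leibniz_pow]
  cases k with
  | zero => field_simp; simp
  | succ k => simp only [smul_eq_mul, nsmul_eq_mul]; field_simp; push_cast; ring

section ClearedIterate

variable {A B : Type*} [CommRing A] [CommRing B] {ι : Type*} [Fintype ι]

noncomputable def clearedIterate (P : Matrix ι ι A[X]) (Q : A[X]) (u : ι → A[X]) :
    ℕ → ι → A[X]
  | 0 => u
  | k + 1 =>
    let v := clearedIterate P Q u k
    Matrix.vecMul v P + Q • (fun j => derivative (v j)) - ((k : A[X]) * derivative Q) • v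

theorem map_clearedIterate (f : A →+* B) (P : Matrix ι ι A[X]) (Q : A[X]) (u : ι → A[X])
    (k : ℕ) (j : ι) :
    (clearedIterate P Q u k j).map f =
      clearedIterate (P.map (Polynomial.map f)) (Q.map f) (fun i => (u i).map f) k j := by
  induction k generalizing j with
  | zero => rfl
  | succ k ih =>
    simp only [clearedIterate, Pi.sub_apply, Pi.add_apply, Pi.smul_apply, smul_eq_mul,
      Matrix.vecMul, dotProduct, Polynomial.map_sub, Polynomial.map_add, Polynomial.map_mul,
      Polynomial.map_sum, Polynomial.map_natCast, ← Polynomial.derivative_map, ih,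
      Matrix.map_apply]

theorem det_clearedIterate_map (f : A →+* B) {n : ℕ} (P : Matrix (Fin n) (Fin n) A[X])
    (Q : A[X]) (u : Fin n → A[X]) :
    (Matrix.of fun i j : Fin n =>
        clearedIterate (P.map (Polynomial.map f)) (Q.map f) (fun i => (u i).map f) i j).det =
      (Matrix.of fun i j : Fin n => clearedIterate P Q u i j).det.map f := by
  rw [← coe_mapRingHom, RingHom.map_det]
  congr 1
  ext i j
  simp [map_clearedIterate]

theorem clearedIterate_upperShift {n : ℕ} (hn : 0 < n) (k : ℕ) (hk : k < n) :
    clearedIterate (Matrix.of fun i j : Fin n => if (j : ℕ) = i + 1 then (1 : A[X]) else 0) 1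
      (Pi.single ⟨0, hn⟩ 1) k = Pi.single ⟨k, hk⟩ 1 := by
  induction k with
  | zero => rfl
  | succ k ih =>
    ext1 j
    rw [clearedIterate, ih (by omega)]
    simp [Pi.single_apply, Fin.ext_iff, eq_comm, apply_ite derivative]

end ClearedIterate

section CyclicVector

variable {F : Type*} [Field F] {n : ℕ}

local notation "ιF" => algebraMap F[X] (RatFunc F)

theorem cvDelta_iterate_eq_div (D : Derivation F (RatFunc F) (RatFunc F))
    (hX : D RatFunc.X = 1) {M : Matrix (Fin n) (Fin n) (RatFunc F)}
    {P : Matrix (Fin n) (Fin n) F[X]} {Q : F[X]} (hQ : Q ≠ 0)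
    (hM : ∀ i j, M i j = ιF (P i j) / ιF Q) (u : Fin n → F[X]) (k : ℕ) :
    (cvDelta D M)^[k] (fun j => ιF (u j)) =
      fun j => ιF (clearedIterate P Q u k j) / ιF Q ^ k := by
  have hq : ιF Q ≠ 0 := (map_ne_zero_iff _ (RatFunc.algebraMap_injective F)).2 hQ
  induction k with
  | zero => simp [clearedIterate]
  | succ k ih =>
    ext1 j
    rw [Function.iterate_succ_apply', ih, cvDelta, Pi.add_apply,
      Derivation.leibniz_div_pow D _ hq, D.apply_algebraMap_polynomial hX,
      D.apply_algebraMap_polynomial hX]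
    simp only [clearedIterate, Matrix.vecMul, dotProduct, hM, Pi.sub_apply, Pi.add_apply,
      Pi.smul_apply, smul_eq_mul, map_sub, map_add, map_mul, map_sum, map_natCast]
    rw [add_sub_assoc, add_div, Finset.sum_div]
    congr 1
    · exact Finset.sum_congr rfl fun i _ => by rw [div_mul_div_comm, pow_succ]
    · ring

theorem isUnit_det_cvDelta_iterate (D : Derivation F (RatFunc F) (RatFunc F))
    (hX : D RatFunc.X = 1) {M : Matrix (Fin n) (Fin n) (RatFunc F)}
    {P : Matrix (Fin n) (Fin n) F[X]} {Q : F[X]} (hQ : Q ≠ 0)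
    (hM : ∀ i j, M i j = ιF (P i j) / ιF Q) (u : Fin n → F[X])
    (hV : (Matrix.of fun i j : Fin n => clearedIterate P Q u i j).det ≠ 0) :
    IsUnit (Matrix.of fun i j : Fin n => (cvDelta D M)^[i] (fun j => ιF (u j)) j).det := by
  have hq : ιF Q ≠ 0 := (map_ne_zero_iff _ (RatFunc.algebraMap_injective F)).2 hQ
  have hΔ : (Matrix.of fun i j : Fin n => (cvDelta D M)^[i] (fun j => ιF (u j)) j) =
      Matrix.diagonal (fun i : Fin n => (ιF Q ^ (i : ℕ))⁻¹) *
        (Matrix.of fun i j : Fin n => clearedIterate P Q u i j).map ιF := by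
    ext i j
    simp [cvDelta_iterate_eq_div D hX hQ hM, Matrix.diagonal_mul, inv_mul_eq_div]
  rw [hΔ, Matrix.det_mul, Matrix.det_diagonal, ← RingHom.mapMatrix_apply, ← RingHom.map_det,
    isUnit_iff_ne_zero]
  exact mul_ne_zero (Finset.prod_ne_zero_iff.2 fun i _ => inv_ne_zero (pow_ne_zero _ hq))
    ((map_ne_zero_iff _ (RatFunc.algebraMap_injective F)).2 hV)

end CyclicVector

section Generic

variable (K : Type*) [Field K] (n d : ℕ)

abbrev GenericVars : Type := (Fin n × Fin n × Fin (d + 1)) ⊕ Fin (d + 1)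

local notation "R" => MvPolynomial (GenericVars n d) K

noncomputable def genericNumerator (i j : Fin n) : R[X] :=
  ∑ k : Fin (d + 1), C (MvPolynomial.X (Sum.inl (i, j, k))) * X ^ (k : ℕ)

noncomputable def genericDenominator : R[X] :=
  ∑ k : Fin (d + 1), C (MvPolynomial.X (Sum.inr k)) * X ^ (k : ℕ)

def shiftPoint : GenericVars n d → K
  | Sum.inl (i, j, k) => if k = 0 ∧ (j : ℕ) = i + 1 then 1 else 0
  | Sum.inr k => if k = 0 then 1 else 0

theorem map_eval_genericNumerator (i j : Fin n) :
    (genericNumerator K n d i j).map (MvPolynomial.eval (shiftPoint K n d)) =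
      if (j : ℕ) = i + 1 then 1 else 0 := by
  simp [genericNumerator, shiftPoint, Fin.sum_univ_succ, Polynomial.map_sum, apply_ite C]

theorem map_eval_genericDenominator :
    (genericDenominator K n d).map (MvPolynomial.eval (shiftPoint K n d)) = 1 := by
  simp [genericDenominator, shiftPoint, Fin.sum_univ_succ, Polynomial.map_sum]

theorem genericDenominator_ne_zero : genericDenominator K n d ≠ 0 := fun h => by
  simpa [h] using map_eval_genericDenominator K n d

theorem det_clearedIterate_generic_ne_zero (hn : 0 < n) :
    (Matrix.of fun i j : Fin n => clearedIterate (Matrix.of (genericNumerator K n d))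
      (genericDenominator K n d) (Pi.single ⟨0, hn⟩ 1) i j).det ≠ 0 := by
  let φ : R →+* K := MvPolynomial.eval (shiftPoint K n d)
  refine ne_of_apply_ne (Polynomial.map φ) ?_
  have hP : (Matrix.of (genericNumerator K n d)).map (Polynomial.map φ) =
      Matrix.of fun i j : Fin n => if (j : ℕ) = i + 1 then (1 : K[X]) else 0 :=
    Matrix.ext fun i j => map_eval_genericNumerator K n d i j
  have he₁ :
      (fun i => ((Pi.single ⟨0, hn⟩ 1 : Fin n → R[X]) i).map φ) = Pi.single ⟨0, hn⟩ 1 := by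
    ext1 i
    simp [Pi.single_apply, apply_ite (Polynomial.map _)]
  have hV : (Matrix.of fun i j : Fin n => clearedIterate
      (Matrix.of fun i j : Fin n => if (j : ℕ) = i + 1 then (1 : K[X]) else 0) 1
      (Pi.single ⟨0, hn⟩ 1) i j) = 1 := by
    refine Matrix.ext fun i j => ?_
    rw [Matrix.of_apply, clearedIterate_upperShift hn i i.isLt, Matrix.one_apply, Pi.single_apply]
    simp [Fin.ext_iff, eq_comm]
  rw [← det_clearedIterate_map, hP, map_eval_genericDenominator, he₁, hV, Matrix.det_one,
    Polynomial.map_zero]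
  exact one_ne_zero

theorem genericMatrix_eq_div (i j : Fin n) :
    let ι := algebraMap (GenEntryField K n d)[X] (RatFunc (GenEntryField K n d))
    let f := algebraMap R (GenEntryField K n d)
    genericMatrix K n d i j =
      ι ((genericNumerator K n d i j).map f) / ι ((genericDenominator K n d).map f) := by
  simp [genericMatrix, genericNumerator, genericDenominator, Polynomial.map_sum,
    RatFunc.algebraMap_C, RatFunc.algebraMap_X]

end Generic

theorem generic_e1_is_cyclic_general {K : Type*} [Field K]
    (n d : ℕ) (hn : 1 ≤ n)
    (der : RatFunc (GenEntryField K n d) → RatFunc (GenEntryField K n d))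
    (h_add : ∀ a b, der (a + b) = der a + der b)
    (h_mul : ∀ a b, der (a * b) = a * der b + der a * b)
    (h_X : der RatFunc.X = 1)
    (h_C : ∀ c : GenEntryField K n d, der (RatFunc.C c) = 0) :
    IsUnit (Matrix.of fun i j : Fin n =>
      (cvDelta der (genericMatrix K n d))^[(i : ℕ)]
        (Pi.single (⟨0, hn⟩ : Fin n) 1) j).det := by
  let f := algebraMap (MvPolynomial (GenericVars n d) K) (GenEntryField K n d)
  have hf : Function.Injective (Polynomial.map f) :=
    map_injective f (IsFractionRing.injective _ _)
  have hQ : (genericDenominator K n d).map f ≠ 0 :=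
    hf.ne_iff' (Polynomial.map_zero f) |>.2 (genericDenominator_ne_zero K n d)
  have hV := det_clearedIterate_generic_ne_zero K n d hn
  rw [← hf.ne_iff' (Polynomial.map_zero f), ← det_clearedIterate_map] at hV
  convert isUnit_det_cvDelta_iterate (RatFunc.derivationOfLeibniz der h_add h_mul h_C) h_X
    hQ (genericMatrix_eq_div K n d) _ hV using 7
  · rfl
  · simp [Pi.single_apply, apply_ite (algebraMap _ _), apply_ite (Polynomial.map _)]

/-- `e₁` is a cyclic vector for the generic matrix `M̂`: the matrix `Δₙ(e₁)`
whose rows are `e₁, δ(e₁), …, δ^{n−1}(e₁)` is invertible over `F(X)`.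
Consequently, on a generic input the DBZ algorithm produces a single companion
block, equal to the output of the cyclic-vector method with initial vector `e₁`.
Here `der` is the derivation of `F(X)` vanishing on `F` with `der X = 1`. -/
theorem generic_e1_is_cyclic {K : Type*} [Field K] [CharZero K]
    (n d : ℕ) (hn : 1 ≤ n)
    (der : RatFunc (GenEntryField K n d) → RatFunc (GenEntryField K n d))
    (h_add : ∀ a b, der (a + b) = der a + der b)
    (h_mul : ∀ a b, der (a * b) = a * der b + der a * b)
    (h_X : der RatFunc.X = 1)
    (h_C : ∀ c : GenEntryField K n d, der (RatFunc.C c) = 0) :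
    IsUnit (Matrix.of fun i j : Fin n =>
      (cvDelta der (genericMatrix K n d))^[(i : ℕ)]
        (Pi.single (⟨0, hn⟩ : Fin n) 1) j).det :=
  generic_e1_is_cyclic_general n d hn der h_add h_mul h_X h_C
end
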